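/- arXiv:1202.6678 — 6 statements merged into one kernel-verified Lean document; each statement's English description precedes it below -/
import Mathlib

section
/- Under assumption (H), for every probability measure μ' on X, every bounded measurable function φ : X → [0,∞) with ν(φ) > 0, every integer n ≥ 1 and every x ∈ X, one has ε⁻/ε⁺ ≤ Q^{(n)}(φ)(x) / (μ'Q^{(n)}(φ)) ≤ ε⁺/ε⁻. -/
open MeasureTheory ProbabilityTheory Filter
open scoped ENNReal

/-- The operator `Q(φ)(x) = G(x) ∫ φ(y) M(x,dy)` associated with the kernel
`Q(x,dy) := G(x) M(x,dy)`. -/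
noncomputable def Qop {X : Type*} [MeasurableSpace X] (G : X → ℝ) (M : Kernel X X)
    (φ : X → ℝ) (x : X) : ℝ :=
  G x * ∫ y, φ y ∂(M x)

/-- The `n`-fold iterate `Q^{(n)}` of the operator `Q`, `Q^{(0)} = Id`. -/
noncomputable def Qiter {X : Type*} [MeasurableSpace X] (G : X → ℝ) (M : Kernel X X) :
    ℕ → (X → ℝ) → X → ℝ
  | 0 => fun φ => φ
  | n + 1 => fun φ => Qop G M (Qiter G M n φ)

section aux

variable {X : Type*} [MeasurableSpace X]

/-- Bounded measurable functions are integrable w.r.t. a probability measure. -/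
lemma integrable_of_bdd (μ : Measure X) [IsProbabilityMeasure μ] {f : X → ℝ}
    (hf : Measurable f) {a b : ℝ} (h1 : ∀ x, a ≤ f x) (h2 : ∀ x, f x ≤ b) :
    Integrable f μ := by
  refine (integrable_const (max |a| |b|)).mono' hf.aestronglyMeasurable ?_
  filter_upwards with y
  rw [Real.norm_eq_abs, abs_le]
  constructor
  · exact le_trans (neg_le_neg (le_max_left _ _)) (le_trans (neg_abs_le a) (h1 y))
  · exact le_trans (h2 y) (le_trans (le_abs_self b) (le_max_right _ _))

/-- Key representation: `Qop G M φ x = ∫ q x y * φ y ∂ν`. -/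
lemma Qop_eq (G : X → ℝ) (M : Kernel X X) [IsMarkovKernel M]
    (ν : Measure X) [IsProbabilityMeasure ν]
    (q : X → X → ℝ) (εm : ℝ)
    (hq_meas : Measurable fun p : X × X => q p.1 p.2)
    (hεm_pos : 0 < εm) (hq_lb : ∀ x y, εm ≤ q x y)
    (hG_pos : ∀ x, 0 < G x)
    (hH : ∀ x (A : Set X), MeasurableSet A →
      ENNReal.ofReal (G x) * M x A = ∫⁻ y in A, ENNReal.ofReal (q x y) ∂ν)
    (φ : X → ℝ) (x : X) :
    Qop G M φ x = ∫ y, q x y * φ y ∂ν := by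
  have hmeq : (ENNReal.ofReal (G x)) • (M x) =
      ν.withDensity (fun y => ((q x y).toNNReal : ℝ≥0∞)) := by
    ext A hA
    rw [Measure.smul_apply, smul_eq_mul, withDensity_apply _ hA]
    simp_rw [ENNReal.ofReal] at hH ⊢
    exact hH x A hA
  have hqm : Measurable fun y => (q x y).toNNReal :=
    (hq_meas.comp measurable_prodMk_left).real_toNNReal
  have h1 : ∫ y, φ y ∂((ENNReal.ofReal (G x)) • (M x)) = G x * ∫ y, φ y ∂(M x) := by
    rw [integral_smul_measure, ENNReal.toReal_ofReal (hG_pos x).le, smul_eq_mul]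
  rw [Qop, ← h1, hmeq, integral_withDensity_eq_integral_smul hqm]
  congr 1
  ext y
  simp [NNReal.smul_def, Real.coe_toNNReal _ (le_trans hεm_pos.le (hq_lb x y))]

end aux

theorem stmt0 {X : Type*} [MeasurableSpace X]
    (G : X → ℝ) (M : Kernel X X) [IsMarkovKernel M]
    (ν : Measure X) [IsProbabilityMeasure ν]
    (q : X → X → ℝ) (εm εp : ℝ)
    (hq_meas : Measurable fun p : X × X => q p.1 p.2)
    (hεm_pos : 0 < εm) (hεle : εm ≤ εp)
    (hq_lb : ∀ x y, εm ≤ q x y) (hq_ub : ∀ x y, q x y ≤ εp)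
    (hG_meas : Measurable G) (hG_pos : ∀ x, 0 < G x) (hG_bdd : ∃ c, ∀ x, G x ≤ c)
    (hH : ∀ x (A : Set X), MeasurableSet A →
      ENNReal.ofReal (G x) * M x A = ∫⁻ y in A, ENNReal.ofReal (q x y) ∂ν)
    (μ' : Measure X) [IsProbabilityMeasure μ']
    (φ : X → ℝ) (hφ_meas : Measurable φ) (hφ_nonneg : ∀ x, 0 ≤ φ x)
    (hφ_bdd : ∃ c, ∀ x, φ x ≤ c) (hφ_pos : 0 < ∫ x, φ x ∂ν)
    (n : ℕ) (hn : 1 ≤ n) (x : X) :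
    εm / εp ≤ Qiter G M n φ x / ∫ y, Qiter G M n φ y ∂μ' ∧
      Qiter G M n φ x / ∫ y, Qiter G M n φ y ∂μ' ≤ εp / εm := by
  have hεp_pos : 0 < εp := lt_of_lt_of_le hεm_pos hεle
  -- Bounds on Qop applied to bounded, nonneg, measurable ψ
  have hQop_bnd : ∀ (ψ : X → ℝ), Measurable ψ → (∀ y, 0 ≤ ψ y) → (∀ c, (∀ y, ψ y ≤ c) →
      ∀ z, εm * ∫ y, ψ y ∂ν ≤ Qop G M ψ z ∧ Qop G M ψ z ≤ εp * ∫ y, ψ y ∂ν) := by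
    intro ψ hψm hψ0 c hψc z
    have hint_ψ : Integrable ψ ν := integrable_of_bdd ν hψm hψ0 hψc
    have hqψ_meas : Measurable fun y => q z y * ψ y :=
      (hq_meas.comp measurable_prodMk_left).mul hψm
    have hc0 : 0 ≤ c := le_trans (hψ0 z) (hψc z)
    have hqψ_lb : ∀ y, (0:ℝ) ≤ q z y * ψ y := fun y =>
      mul_nonneg (le_trans hεm_pos.le (hq_lb z y)) (hψ0 y)
    have hqψ_ub : ∀ y, q z y * ψ y ≤ εp * c := fun y =>
      mul_le_mul (hq_ub z y) (hψc y) (hψ0 y) hεp_pos.le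
    have hint_qψ : Integrable (fun y => q z y * ψ y) ν :=
      integrable_of_bdd ν hqψ_meas hqψ_lb hqψ_ub
    rw [Qop_eq G M ν q εm hq_meas hεm_pos hq_lb hG_pos hH ψ z]
    constructor
    · rw [← integral_const_mul]
      exact integral_mono (hint_ψ.const_mul εm) hint_qψ fun y =>
        mul_le_mul_of_nonneg_right (hq_lb z y) (hψ0 y)
    · rw [← integral_const_mul]
      exact integral_mono hint_qψ (hint_ψ.const_mul εp) fun y =>
        mul_le_mul_of_nonneg_right (hq_ub z y) (hψ0 y)
  -- Basic properties of all iterates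
  have hprops : ∀ k : ℕ, Measurable (Qiter G M k φ) ∧ (∀ y, 0 ≤ Qiter G M k φ y) ∧
      (∃ c, ∀ y, Qiter G M k φ y ≤ c) ∧ 0 < ∫ y, Qiter G M k φ y ∂ν := by
    intro k
    induction k with
    | zero => exact ⟨hφ_meas, hφ_nonneg, hφ_bdd, hφ_pos⟩
    | succ m ih =>
      obtain ⟨hm, h0, ⟨c, hc⟩, hpos⟩ := ih
      set ψ := Qiter G M m φ
      have hbnd := hQop_bnd ψ hm h0 c hc
      have hmeas : Measurable (Qiter G M (m+1) φ) := by
        have : StronglyMeasurable fun z => ∫ y, (fun p : X × X => ψ p.2) (z, y) ∂(M z) :=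
          StronglyMeasurable.integral_kernel_prod_right'
            ((hm.comp measurable_snd).stronglyMeasurable)
        exact hG_meas.mul this.measurable
      have hnonneg : ∀ y, 0 ≤ Qiter G M (m+1) φ y := fun y =>
        le_trans (mul_nonneg hεm_pos.le (le_of_lt hpos)) (hbnd y).1
      have hbddnew : ∃ c', ∀ y, Qiter G M (m+1) φ y ≤ c' :=
        ⟨εp * ∫ y, ψ y ∂ν, fun y => (hbnd y).2⟩
      have hintnew : Integrable (Qiter G M (m+1) φ) ν :=
        integrable_of_bdd ν hmeas (fun y => (hbnd y).1) (fun y => (hbnd y).2)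
      have hposnew : 0 < ∫ y, Qiter G M (m+1) φ y ∂ν := by
        have h1 : εm * ∫ y, ψ y ∂ν ≤ ∫ y, Qiter G M (m+1) φ y ∂ν := by
          have := integral_mono (integrable_const (εm * ∫ y, ψ y ∂ν)) hintnew
            fun y => (hbnd y).1
          simpa using this
        exact lt_of_lt_of_le (mul_pos hεm_pos hpos) h1
      exact ⟨hmeas, hnonneg, hbddnew, hposnew⟩
  -- Main argument
  obtain ⟨m, rfl⟩ : ∃ m, n = m + 1 := ⟨n - 1, (Nat.succ_pred_eq_of_pos hn).symm⟩
  obtain ⟨hm, h0, ⟨c, hc⟩, hpos⟩ := hprops m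
  set ψ := Qiter G M m φ
  set cν := ∫ y, ψ y ∂ν with hcν
  have hbnd := hQop_bnd ψ hm h0 c hc
  obtain ⟨hmeasn, hnonnegn, _, _⟩ := hprops (m+1)
  have hintμ' : Integrable (Qiter G M (m+1) φ) μ' :=
    integrable_of_bdd μ' hmeasn (fun y => (hbnd y).1) (fun y => (hbnd y).2)
  set I := ∫ y, Qiter G M (m+1) φ y ∂μ' with hI
  have hI_lb : εm * cν ≤ I := by
    have := integral_mono (μ := μ') (integrable_const (εm * cν)) hintμ' fun y => (hbnd y).1
    simpa using this
  have hI_ub : I ≤ εp * cν := by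
    have := integral_mono (μ := μ') hintμ' (integrable_const (εp * cν)) fun y => (hbnd y).2
    simpa using this
  have hεmc_pos : 0 < εm * cν := mul_pos hεm_pos hpos
  have hεpc_pos : 0 < εp * cν := mul_pos hεp_pos hpos
  have hI_pos : 0 < I := lt_of_lt_of_le hεmc_pos hI_lb
  have hA_lb : εm * cν ≤ Qiter G M (m+1) φ x := (hbnd x).1
  have hA_ub : Qiter G M (m+1) φ x ≤ εp * cν := (hbnd x).2
  constructor
  · have h1 : εm / εp = (εm * cν) / (εp * cν) := by
      rw [mul_div_mul_right _ _ (ne_of_gt hpos)]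
    rw [h1]
    exact div_le_div₀ (le_trans hεmc_pos.le hA_lb) hA_lb hI_pos hI_ub
  · have h1 : εp / εm = (εp * cν) / (εm * cν) := by
      rw [mul_div_mul_right _ _ (ne_of_gt hpos)]
    rw [h1]
    exact div_le_div₀ hεpc_pos.le hA_ub hεmc_pos hI_lb
end

section
/- Under assumption (H), the limit Λ⋆ := lim_{n→∞} (1/n) log νQ^{(n)}(1) exists, it equals lim_{n→∞} (1/n) log sup_{x∈X} Q^{(n)}(1)(x) (the logarithm of the spectral radius of Q acting on the bounded measurable functions), and it satisfies log ε⁻ ≤ Λ⋆ ≤ log ε⁺; equivalently, λ⋆ := exp(Λ⋆) satisfies ε⁻ ≤ λ⋆ ≤ ε⁺. -/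
open MeasureTheory ProbabilityTheory Filter
open scoped ENNReal

lemma Qiter_add {X : Type*} [MeasurableSpace X] (G : X → ℝ) (M : Kernel X X)
    (m n : ℕ) (φ : X → ℝ) :
    Qiter G M (m + n) φ = Qiter G M m (Qiter G M n φ) := by
  induction m with
  | zero => simp [Qiter, Nat.zero_add]
  | succ m ih =>
    have h : m + 1 + n = (m + n) + 1 := by omega
    rw [h]
    show Qop G M (Qiter G M (m + n) φ) = Qop G M (Qiter G M m (Qiter G M n φ))
    rw [ih]

theorem stmt1 {X : Type*} [MeasurableSpace X]
    (G : X → ℝ) (M : Kernel X X) [IsMarkovKernel M]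
    (ν : Measure X) [IsProbabilityMeasure ν]
    (q : X → X → ℝ) (εm εp : ℝ)
    (hq_meas : Measurable fun p : X × X => q p.1 p.2)
    (hεm_pos : 0 < εm) (hεle : εm ≤ εp)
    (hq_lb : ∀ x y, εm ≤ q x y) (hq_ub : ∀ x y, q x y ≤ εp)
    (hG_meas : Measurable G) (hG_pos : ∀ x, 0 < G x) (hG_bdd : ∃ c, ∀ x, G x ≤ c)
    (hH : ∀ x (A : Set X), MeasurableSet A →
      ENNReal.ofReal (G x) * M x A = ∫⁻ y in A, ENNReal.ofReal (q x y) ∂ν) :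
    ∃ Λ : ℝ,
      Tendsto (fun n : ℕ => (n : ℝ)⁻¹ *
          Real.log (∫ x, Qiter G M n (fun _ => (1 : ℝ)) x ∂ν)) atTop (nhds Λ) ∧
      Tendsto (fun n : ℕ => (n : ℝ)⁻¹ *
          Real.log (⨆ x : X, Qiter G M n (fun _ => (1 : ℝ)) x)) atTop (nhds Λ) ∧
      Real.log εm ≤ Λ ∧ Λ ≤ Real.log εp ∧
      εm ≤ Real.exp Λ ∧ Real.exp Λ ≤ εp := by
  have hεp_pos : 0 < εp := lt_of_lt_of_le hεm_pos hεle
  -- X is nonempty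
  have hX : Nonempty X := by
    by_contra h
    have h1 : ν Set.univ = 1 := measure_univ
    rw [Set.univ_eq_empty_iff.2 (not_nonempty_iff.1 h), measure_empty] at h1
    exact zero_ne_one h1
  set f : ℕ → X → ℝ := fun n => Qiter G M n (fun _ => (1 : ℝ)) with hf
  have hq_x : ∀ x, Measurable fun y => q x y := fun x =>
    hq_meas.comp (measurable_prodMk_left)
  have hq_nonneg : ∀ x y, 0 ≤ q x y := fun x y => hεm_pos.le.trans (hq_lb x y)
  -- Key representation: Qop φ x = ∫ q x y * φ y dν
  have keyA : ∀ (φ : X → ℝ), Measurable φ → ∀ x,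
      Qop G M φ x = ∫ y, q x y * φ y ∂ν := by
    intro φ hφ x
    have hw : Measurable fun y => (q x y).toNNReal := (hq_x x).real_toNNReal
    have hm : (ENNReal.ofReal (G x)) • (M x)
        = ν.withDensity (fun y => ((q x y).toNNReal : ℝ≥0∞)) := by
      ext A hA
      rw [Measure.smul_apply, smul_eq_mul, withDensity_apply _ hA]
      exact hH x A hA
    have h1 : Qop G M φ x = ∫ y, φ y ∂((ENNReal.ofReal (G x)) • (M x)) := by
      rw [integral_smul_measure, ENNReal.toReal_ofReal (hG_pos x).le, smul_eq_mul]
      rfl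
    rw [h1, hm, integral_withDensity_eq_integral_smul hw]
    refine integral_congr_ae (Eventually.of_forall fun y => ?_)
    show (q x y).toNNReal • φ y = q x y * φ y
    rw [NNReal.smul_def, smul_eq_mul, Real.coe_toNNReal _ (hq_nonneg x y)]
  -- Basic bounds on f n
  have hB : ∀ n : ℕ, Measurable (f n) ∧ ∀ x, εm ^ n ≤ f n x ∧ f n x ≤ εp ^ n := by
    intro n
    induction n with
    | zero =>
      refine ⟨measurable_const, fun x => ?_⟩
      simp [hf, Qiter]
    | succ n ih =>
      obtain ⟨hmeas, hbd⟩ := ih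
      have hrepr : ∀ x, f (n + 1) x = ∫ y, q x y * f n y ∂ν := fun x =>
        keyA (f n) hmeas x
      have hfn_nonneg : ∀ y, 0 ≤ f n y := fun y =>
        le_trans (pow_nonneg hεm_pos.le n) (hbd y).1
      have hint : ∀ x, Integrable (fun y => q x y * f n y) ν := by
        intro x
        refine Integrable.mono' (integrable_const (εp * εp ^ n))
          ((hq_x x).mul hmeas).aestronglyMeasurable
          (Eventually.of_forall fun y => ?_)
        rw [Real.norm_eq_abs, abs_of_nonneg (mul_nonneg (hq_nonneg x y) (hfn_nonneg y))]
        exact mul_le_mul (hq_ub x y) (hbd y).2 (hfn_nonneg y) hεp_pos.le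
      have hmeas1 : Measurable (f (n + 1)) := by
        have hsm : StronglyMeasurable fun p : X × X => q p.1 p.2 * f n p.2 :=
          (hq_meas.mul (hmeas.comp measurable_snd)).stronglyMeasurable
        have := hsm.integral_prod_right' (ν := ν)
        have heq : f (n + 1) = fun x => ∫ y, q x y * f n y ∂ν := funext hrepr
        rw [heq]
        exact this.measurable
      refine ⟨hmeas1, fun x => ?_⟩
      constructor
      · rw [hrepr x]
        calc εm ^ (n + 1) = ∫ _, εm * εm ^ n ∂ν := by
              simp [pow_succ, mul_comm]
          _ ≤ ∫ y, q x y * f n y ∂ν := by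
              refine integral_mono (integrable_const _) (hint x) fun y => ?_
              exact mul_le_mul (hq_lb x y) (hbd y).1 (pow_nonneg hεm_pos.le n)
                (hq_nonneg x y)
      · rw [hrepr x]
        calc ∫ y, q x y * f n y ∂ν ≤ ∫ _, εp * εp ^ n ∂ν := by
              refine integral_mono (hint x) (integrable_const _) fun y => ?_
              exact mul_le_mul (hq_ub x y) (hbd y).2 (hfn_nonneg y) hεp_pos.le
          _ = εp ^ (n + 1) := by simp [pow_succ, mul_comm]
  have hfmeas : ∀ n, Measurable (f n) := fun n => (hB n).1
  have hf_lb : ∀ n x, εm ^ n ≤ f n x := fun n x => ((hB n).2 x).1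
  have hf_ub : ∀ n x, f n x ≤ εp ^ n := fun n x => ((hB n).2 x).2
  have hf_pos : ∀ n x, 0 < f n x := fun n x =>
    lt_of_lt_of_le (pow_pos hεm_pos n) (hf_lb n x)
  -- Transfer lemma: iterates of a bounded ψ are dominated by C * f n
  have hC : ∀ (ψ : X → ℝ) (C : ℝ), Measurable ψ → (∀ y, 0 ≤ ψ y) → (∀ y, ψ y ≤ C) →
      ∀ n : ℕ, Measurable (Qiter G M n ψ) ∧
        ∀ x, 0 ≤ Qiter G M n ψ x ∧ Qiter G M n ψ x ≤ C * f n x := by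
    intro ψ C hψ hψ0 hψC n
    have hC0 : 0 ≤ C := le_trans (hψ0 hX.some) (hψC hX.some)
    induction n with
    | zero =>
      refine ⟨hψ, fun x => ⟨hψ0 x, ?_⟩⟩
      have : f 0 x = 1 := by simp [hf, Qiter]
      rw [this, mul_one]
      exact hψC x
    | succ n ih =>
      obtain ⟨hmeas, hbd⟩ := ih
      have hrepr : ∀ x, Qiter G M (n + 1) ψ x = ∫ y, q x y * Qiter G M n ψ y ∂ν :=
        fun x => keyA _ hmeas x
      have hub : ∀ y, Qiter G M n ψ y ≤ C * εp ^ n := fun y =>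
        le_trans (hbd y).2 (mul_le_mul_of_nonneg_left (hf_ub n y) hC0)
      have hint : ∀ x, Integrable (fun y => q x y * Qiter G M n ψ y) ν := by
        intro x
        refine Integrable.mono' (integrable_const (εp * (C * εp ^ n)))
          ((hq_x x).mul hmeas).aestronglyMeasurable
          (Eventually.of_forall fun y => ?_)
        rw [Real.norm_eq_abs, abs_of_nonneg (mul_nonneg (hq_nonneg x y) (hbd y).1)]
        exact mul_le_mul (hq_ub x y) (hub y) (hbd y).1 hεp_pos.le
      have hint2 : ∀ x, Integrable (fun y => q x y * (C * f n y)) ν := by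
        intro x
        refine Integrable.mono' (integrable_const (εp * (C * εp ^ n)))
          ((hq_x x).mul (measurable_const.mul (hfmeas n))).aestronglyMeasurable
          (Eventually.of_forall fun y => ?_)
        rw [Real.norm_eq_abs, abs_of_nonneg (mul_nonneg (hq_nonneg x y)
          (mul_nonneg hC0 (hf_pos n y).le))]
        exact mul_le_mul (hq_ub x y)
          (mul_le_mul_of_nonneg_left (hf_ub n y) hC0)
          (mul_nonneg hC0 (hf_pos n y).le) hεp_pos.le
      have hmeas1 : Measurable (Qiter G M (n + 1) ψ) := by
        have hsm : StronglyMeasurable fun p : X × X => q p.1 p.2 * Qiter G M n ψ p.2 :=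
          (hq_meas.mul (hmeas.comp measurable_snd)).stronglyMeasurable
        have := hsm.integral_prod_right' (ν := ν)
        have heq : Qiter G M (n + 1) ψ = fun x => ∫ y, q x y * Qiter G M n ψ y ∂ν :=
          funext hrepr
        rw [heq]
        exact this.measurable
      refine ⟨hmeas1, fun x => ?_⟩
      constructor
      · rw [hrepr x]
        exact integral_nonneg fun y => mul_nonneg (hq_nonneg x y) (hbd y).1
      · rw [hrepr x]
        have hfr : f (n + 1) x = ∫ y, q x y * f n y ∂ν := keyA (f n) (hfmeas n) x
        calc ∫ y, q x y * Qiter G M n ψ y ∂ν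
            ≤ ∫ y, q x y * (C * f n y) ∂ν := by
              refine integral_mono (hint x) (hint2 x) fun y => ?_
              exact mul_le_mul_of_nonneg_left (hbd y).2 (hq_nonneg x y)
          _ = C * ∫ y, q x y * f n y ∂ν := by
              rw [← integral_const_mul]
              refine integral_congr_ae (Eventually.of_forall fun y => ?_)
              ring
          _ = C * f (n + 1) x := by rw [hfr]
  -- sup and integral sequences
  set s : ℕ → ℝ := fun n => ⨆ x, f n x with hs
  set a : ℕ → ℝ := fun n => ∫ x, f n x ∂ν with ha
  have hbdda : ∀ n, BddAbove (Set.range (f n)) := fun n =>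
    ⟨εp ^ n, by rintro y ⟨x, rfl⟩; exact hf_ub n x⟩
  have hs_le : ∀ n x, f n x ≤ s n := fun n x => le_ciSup (hbdda n) x
  have hs_lb : ∀ n, εm ^ n ≤ s n := fun n =>
    le_trans (hf_lb n hX.some) (hs_le n hX.some)
  have hs_ub : ∀ n, s n ≤ εp ^ n := fun n => ciSup_le fun x => hf_ub n x
  have hs_pos : ∀ n, 0 < s n := fun n => lt_of_lt_of_le (pow_pos hεm_pos n) (hs_lb n)
  have hfint : ∀ n, Integrable (f n) ν := by
    intro n
    refine Integrable.mono' (integrable_const (εp ^ n))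
      (hfmeas n).aestronglyMeasurable (Eventually.of_forall fun x => ?_)
    rw [Real.norm_eq_abs, abs_of_nonneg (hf_pos n x).le]
    exact hf_ub n x
  have ha_lb : ∀ n, εm ^ n ≤ a n := by
    intro n
    calc εm ^ n = ∫ _, εm ^ n ∂ν := by simp
      _ ≤ a n := integral_mono (integrable_const _) (hfint n) (hf_lb n)
  have ha_pos : ∀ n, 0 < a n := fun n => lt_of_lt_of_le (pow_pos hεm_pos n) (ha_lb n)
  have ha_le_s : ∀ n, a n ≤ s n := by
    intro n
    calc a n ≤ ∫ _, s n ∂ν := integral_mono (hfint n) (integrable_const _) (hs_le n)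
      _ = s n := by simp
  -- f (n+1) x ≤ εp * a n, and εm * a n ≤ a (n+1)
  have h_up : ∀ n x, f (n + 1) x ≤ εp * a n := by
    intro n x
    have hrepr : f (n + 1) x = ∫ y, q x y * f n y ∂ν := keyA (f n) (hfmeas n) x
    rw [hrepr]
    calc ∫ y, q x y * f n y ∂ν ≤ ∫ y, εp * f n y ∂ν := by
          refine integral_mono ?_ ((hfint n).const_mul εp) fun y => ?_
          · refine Integrable.mono' ((hfint n).const_mul εp)
              ((hq_x x).mul (hfmeas n)).aestronglyMeasurable
              (Eventually.of_forall fun y => ?_)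
            rw [Real.norm_eq_abs, abs_of_nonneg (mul_nonneg (hq_nonneg x y) (hf_pos n y).le)]
            exact mul_le_mul_of_nonneg_right (hq_ub x y) (hf_pos n y).le
          · exact mul_le_mul_of_nonneg_right (hq_ub x y) (hf_pos n y).le
      _ = εp * a n := by rw [integral_const_mul]
  have h_low : ∀ n x, εm * a n ≤ f (n + 1) x := by
    intro n x
    have hrepr : f (n + 1) x = ∫ y, q x y * f n y ∂ν := keyA (f n) (hfmeas n) x
    rw [hrepr]
    calc εm * a n = ∫ y, εm * f n y ∂ν := by rw [integral_const_mul]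
      _ ≤ ∫ y, q x y * f n y ∂ν := by
          refine integral_mono ((hfint n).const_mul εm) ?_ fun y => ?_
          · refine Integrable.mono' ((hfint n).const_mul εp)
              ((hq_x x).mul (hfmeas n)).aestronglyMeasurable
              (Eventually.of_forall fun y => ?_)
            rw [Real.norm_eq_abs, abs_of_nonneg (mul_nonneg (hq_nonneg x y) (hf_pos n y).le)]
            exact mul_le_mul_of_nonneg_right (hq_ub x y) (hf_pos n y).le
          · exact mul_le_mul_of_nonneg_right (hq_lb x y) (hf_pos n y).le
  -- s is submultiplicative
  have hs_submul : ∀ m n, s (m + n) ≤ s m * s n := by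
    intro m n
    refine ciSup_le fun x => ?_
    have hcomp : f (m + n) x = Qiter G M m (f n) x := by
      simp only [hf]; rw [Qiter_add]
    have hb := ((hC (f n) (s n) (hfmeas n) (fun y => (hf_pos n y).le) (hs_le n) m).2 x).2
    rw [hcomp]
    calc Qiter G M m (f n) x ≤ s n * f m x := hb
      _ ≤ s n * s m := mul_le_mul_of_nonneg_left (hs_le m x) (hs_pos n).le
      _ = s m * s n := mul_comm _ _
  set u : ℕ → ℝ := fun n => Real.log (s n) with hu
  have hu_sub : Subadditive u := by
    intro m n
    rw [hu]
    calc Real.log (s (m + n)) ≤ Real.log (s m * s n) :=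
          Real.log_le_log (hs_pos (m + n)) (hs_submul m n)
      _ = u m + u n := Real.log_mul (hs_pos m).ne' (hs_pos n).ne'
  have hu_lb : ∀ n : ℕ, (n : ℝ) * Real.log εm ≤ u n := by
    intro n
    rw [hu]
    calc (n : ℝ) * Real.log εm = Real.log (εm ^ n) := (Real.log_pow εm n).symm
      _ ≤ Real.log (s n) := Real.log_le_log (pow_pos hεm_pos n) (hs_lb n)
  have hu_ub : ∀ n : ℕ, u n ≤ (n : ℝ) * Real.log εp := by
    intro n
    rw [hu]
    calc Real.log (s n) ≤ Real.log (εp ^ n) := Real.log_le_log (hs_pos n) (hs_ub n)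
      _ = (n : ℝ) * Real.log εp := Real.log_pow εp n
  have hbdd : BddBelow (Set.range fun n : ℕ => u n / n) := by
    refine ⟨min (Real.log εm) 0, ?_⟩
    rintro x ⟨n, rfl⟩
    rcases Nat.eq_zero_or_pos n with h | h
    · subst h
      simp only [Nat.cast_zero, div_zero]
      exact min_le_right _ _
    · refine le_trans (min_le_left _ _) ?_
      rw [le_div_iff₀ (by exact_mod_cast h : (0:ℝ) < n)]
      rw [mul_comm]
      exact hu_lb n
  have htend_u : Tendsto (fun n : ℕ => u n / n) atTop (nhds hu_sub.lim) :=
    hu_sub.tendsto_lim hbdd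
  set Λ : ℝ := hu_sub.lim with hΛ
  -- Λ bounds
  have hΛ_lb : Real.log εm ≤ Λ := by
    refine ge_of_tendsto htend_u ?_
    filter_upwards [eventually_ge_atTop 1] with n hn
    rw [le_div_iff₀ (by exact_mod_cast hn : (0:ℝ) < n), mul_comm]
    exact hu_lb n
  have hΛ_ub : Λ ≤ Real.log εp := by
    refine le_of_tendsto htend_u ?_
    filter_upwards [eventually_ge_atTop 1] with n hn
    rw [div_le_iff₀ (by exact_mod_cast hn : (0:ℝ) < n), mul_comm]
    exact hu_ub n
  -- sup tendsto
  have htend_s : Tendsto (fun n : ℕ => (n : ℝ)⁻¹ *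
      Real.log (⨆ x : X, Qiter G M n (fun _ => (1 : ℝ)) x)) atTop (nhds Λ) := by
    refine htend_u.congr fun n => ?_
    rw [div_eq_inv_mul]
  -- integral tendsto via squeeze
  have hsa : ∀ n : ℕ, 1 ≤ n → s n ≤ (εp / εm) * a n := by
    intro n hn
    obtain ⟨k, rfl⟩ : ∃ k, n = k + 1 := ⟨n - 1, by omega⟩
    refine ciSup_le fun x => ?_
    calc f (k + 1) x ≤ εp * a k := h_up k x
      _ = (εp / εm) * (εm * a k) := by rw [← mul_assoc, div_mul_cancel₀ εp hεm_pos.ne']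
      _ ≤ (εp / εm) * a (k + 1) := by
          refine mul_le_mul_of_nonneg_left ?_ (div_nonneg hεp_pos.le hεm_pos.le)
          calc εm * a k = ∫ _, εm * a k ∂ν := by simp
            _ ≤ a (k + 1) := integral_mono (integrable_const _) (hfint (k + 1))
                (fun x => h_low k x)
  have hlog_a_ub : ∀ n : ℕ, Real.log (a n) ≤ u n := fun n =>
    Real.log_le_log (ha_pos n) (ha_le_s n)
  have hlog_a_lb : ∀ n : ℕ, 1 ≤ n → u n - Real.log (εp / εm) ≤ Real.log (a n) := by
    intro n hn
    have h1 : s n ≤ (εp / εm) * a n := hsa n hn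
    have h2 : Real.log (s n) ≤ Real.log (εp / εm) + Real.log (a n) := by
      calc Real.log (s n) ≤ Real.log ((εp / εm) * a n) :=
            Real.log_le_log (hs_pos n) h1
        _ = Real.log (εp / εm) + Real.log (a n) :=
            Real.log_mul (by positivity) (ha_pos n).ne'
    linarith [h2]
  have htend_lower : Tendsto (fun n : ℕ => u n / n - Real.log (εp / εm) / n)
      atTop (nhds Λ) := by
    have h0 : Tendsto (fun n : ℕ => Real.log (εp / εm) / n) atTop (nhds 0) :=
      tendsto_const_nhds.div_atTop tendsto_natCast_atTop_atTop
    simpa using htend_u.sub h0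
  have htend_a : Tendsto (fun n : ℕ => (n : ℝ)⁻¹ *
      Real.log (∫ x, Qiter G M n (fun _ => (1 : ℝ)) x ∂ν)) atTop (nhds Λ) := by
    have key : Tendsto (fun n : ℕ => Real.log (a n) / n) atTop (nhds Λ) := by
      refine tendsto_of_tendsto_of_tendsto_of_le_of_le' htend_lower htend_u ?_ ?_
      · filter_upwards [eventually_ge_atTop 1] with n hn
        have hnpos : (0:ℝ) < n := by exact_mod_cast hn
        rw [← sub_div]
        exact div_le_div_of_nonneg_right (hlog_a_lb n hn) hnpos.le
      · filter_upwards [eventually_ge_atTop 1] with n hn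
        have hnpos : (0:ℝ) < n := by exact_mod_cast hn
        exact div_le_div_of_nonneg_right (hlog_a_ub n) hnpos.le
    refine key.congr fun n => ?_
    rw [div_eq_inv_mul]
  refine ⟨Λ, htend_a, htend_s, hΛ_lb, hΛ_ub, ?_, ?_⟩
  · calc εm = Real.exp (Real.log εm) := (Real.exp_log hεm_pos).symm
      _ ≤ Real.exp Λ := Real.exp_le_exp.2 hΛ_lb
  · calc Real.exp Λ ≤ Real.exp (Real.log εp) := Real.exp_le_exp.2 hΛ_ub
      _ = εp := Real.exp_log hεp_pos
end

section
/- Under assumption (H), with λ⋆ := exp(lim_{n→∞} (1/n) log νQ^{(n)}(1)): (i) if η and η' are probability measures on X with ηQ = λ⋆η and η'Q = λ⋆η', then η = η'; (ii) if h and h' are bounded measurable nonnegative functions, neither of which is ν-almost everywhere zero, satisfying Q(h) = λ⋆h and Q(h') = λ⋆h' pointwise, then there is a constant c > 0 with h = c·h' ν-almost everywhere. -/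
/-!
Under (H) the operator `Q` has density `q` with respect to `ν`, so an eigenfunction `h` satisfies
`λ h(x) = ∫ h(y) q(x,y) ν(dy)`, and by Tonelli an eigenmeasure `η` has a density
`ρ(y) = λ⁻¹ ∫ q(x,y) η(dx)` with respect to `ν` solving the transposed equation. Both parts thus
reduce to uniqueness of nonnegative integrable eigenfunctions of an integral operator whose kernel
is pinched between `ε⁻ > 0` and `ε⁺`. Such an eigenfunction `f` with `∫ f > 0` satisfies
`ε⁻ ∫ f ≤ λ f ≤ ε⁺ ∫ f`. Given two of them, let `c` be the largest constant with `c f' ≤ f`: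
then `f - c f'` is again a nonnegative eigenfunction, and if its integral were positive it would be
bounded below by a positive constant, contradicting the maximality of `c`.
-/

open MeasureTheory ProbabilityTheory Filter
open scoped ENNReal

open Function

section KernelEigen

variable {X : Type*} [MeasurableSpace X]

def IsLeftEigenfunction (ν : Measure X) (k : X → X → ℝ) (lam : ℝ) (f : X → ℝ) : Prop :=
  ∀ y, lam * f y = ∫ x, f x * k x y ∂ν

variable {ν : Measure X}

lemma integrable_mul_kernel {k : X → X → ℝ} {εp : ℝ} (hk : Measurable (uncurry k))
    (hk0 : ∀ x y, 0 ≤ k x y) (hk_ub : ∀ x y, k x y ≤ εp) {f : X → ℝ} (hf : Integrable f ν)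
    (y : X) : Integrable (fun x => f x * k x y) ν :=
  hf.mul_bdd hk.of_uncurry_right.aestronglyMeasurable
    (ae_of_all _ fun x => (Real.norm_of_nonneg (hk0 x y)).trans_le (hk_ub x y))

namespace IsLeftEigenfunction

variable {k : X → X → ℝ} {lam εm εp : ℝ} {f f' : X → ℝ}

lemma mul_integral_le (hf : IsLeftEigenfunction ν k lam f) (hk : Measurable (uncurry k))
    (hεm : 0 < εm) (hk_lb : ∀ x y, εm ≤ k x y) (hk_ub : ∀ x y, k x y ≤ εp)
    (hfi : Integrable f ν) (hf0 : 0 ≤ f) (y : X) :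
    εm * ∫ x, f x ∂ν ≤ lam * f y := by
  rw [hf y, ← integral_const_mul]
  refine integral_mono (hfi.const_mul εm)
    (integrable_mul_kernel hk (fun x y => hεm.le.trans (hk_lb x y)) hk_ub hfi y) fun x => ?_
  rw [mul_comm]
  exact mul_le_mul_of_nonneg_left (hk_lb x y) (hf0 x)

lemma le_mul_integral (hf : IsLeftEigenfunction ν k lam f) (hk : Measurable (uncurry k))
    (hk0 : ∀ x y, 0 ≤ k x y) (hk_ub : ∀ x y, k x y ≤ εp)
    (hfi : Integrable f ν) (hf0 : 0 ≤ f) (y : X) :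
    lam * f y ≤ εp * ∫ x, f x ∂ν := by
  rw [hf y, ← integral_const_mul]
  refine integral_mono (integrable_mul_kernel hk hk0 hk_ub hfi y) (hfi.const_mul εp) fun x => ?_
  rw [mul_comm εp]
  exact mul_le_mul_of_nonneg_left (hk_ub x y) (hf0 x)

lemma sub_const_mul (hf : IsLeftEigenfunction ν k lam f) (hf' : IsLeftEigenfunction ν k lam f')
    (hk : Measurable (uncurry k)) (hk0 : ∀ x y, 0 ≤ k x y) (hk_ub : ∀ x y, k x y ≤ εp)
    (hfi : Integrable f ν) (hfi' : Integrable f' ν) (c : ℝ) :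
    IsLeftEigenfunction ν k lam fun y => f y - c * f' y := by
  intro y
  simp_rw [sub_mul, mul_assoc]
  rw [integral_sub (integrable_mul_kernel hk hk0 hk_ub hfi y)
    ((integrable_mul_kernel hk hk0 hk_ub hfi' y).const_mul c), integral_const_mul, ← hf y,
    ← hf' y]
  ring

lemma exists_pos_le (hf : IsLeftEigenfunction ν k lam f) (hk : Measurable (uncurry k))
    (hεm : 0 < εm) (hk_lb : ∀ x y, εm ≤ k x y) (hk_ub : ∀ x y, k x y ≤ εp) (hlam : 0 < lam)
    (hfi : Integrable f ν) (hf0 : 0 ≤ f) (hfpos : 0 < ∫ x, f x ∂ν) :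
    ∃ a > 0, ∀ y, a ≤ f y :=
  ⟨εm * (∫ x, f x ∂ν) / lam, by positivity, fun y => (div_le_iff₀' hlam).2
    (hf.mul_integral_le hk hεm hk_lb hk_ub hfi hf0 y)⟩

theorem exists_pos_ae_eq_const_mul (hf : IsLeftEigenfunction ν k lam f)
    (hf' : IsLeftEigenfunction ν k lam f') (hk : Measurable (uncurry k))
    (hεm : 0 < εm) (hk_lb : ∀ x y, εm ≤ k x y) (hk_ub : ∀ x y, k x y ≤ εp) (hlam : 0 < lam)
    (hfi : Integrable f ν) (hfi' : Integrable f' ν) (hf0 : 0 ≤ f) (hf0' : 0 ≤ f')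
    (hfpos : 0 < ∫ x, f x ∂ν) (hfpos' : 0 < ∫ x, f' x ∂ν) :
    ∃ c, 0 < c ∧ f =ᵐ[ν] fun x => c * f' x := by
  have hk0 : ∀ x y, 0 ≤ k x y := fun x y => hεm.le.trans (hk_lb x y)
  have : Nonempty X := by
    by_contra hX
    rw [not_nonempty_iff] at hX
    simp [integral_of_isEmpty] at hfpos
  obtain ⟨a, ha, hfa⟩ := hf.exists_pos_le hk hεm hk_lb hk_ub hlam hfi hf0 hfpos
  obtain ⟨a', ha', hfa'⟩ := hf'.exists_pos_le hk hεm hk_lb hk_ub hlam hfi' hf0' hfpos'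
  have hf'pos : ∀ y, 0 < f' y := fun y => ha'.trans_le (hfa' y)
  set B := εp * (∫ x, f' x ∂ν) / lam
  have hf'B : ∀ y, f' y ≤ B := fun y =>
    (le_div_iff₀' hlam).2 (hf'.le_mul_integral hk hk0 hk_ub hfi' hf0' y)
  have hB : 0 < B := (hf'pos (Classical.arbitrary X)).trans_le (hf'B _)
  set c := ⨅ y, f y / f' y
  have hcf' : ∀ y, c * f' y ≤ f y := fun y =>
    (le_div_iff₀ (hf'pos y)).1
      (ciInf_le ⟨0, by rintro _ ⟨z, rfl⟩; exact div_nonneg (hf0 z) (hf0' z)⟩ y)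
  have le_c : ∀ t, (∀ y, t * f' y ≤ f y) → t ≤ c := fun t ht =>
    le_ciInf fun y => (le_div_iff₀ (hf'pos y)).2 (ht y)
  have hc : 0 < c := by
    refine (div_pos ha hB).trans_le (le_c _ fun y => ?_)
    calc a / B * f' y ≤ a / B * B := by gcongr; exact hf'B y
      _ = a := div_mul_cancel₀ a hB.ne'
      _ ≤ f y := hfa y
  refine ⟨c, hc, ?_⟩
  set g := fun y => f y - c * f' y
  have hg0 : 0 ≤ g := fun y => sub_nonneg.2 (hcf' y)
  have hgi : Integrable g ν := hfi.sub (hfi'.const_mul c)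
  suffices hg : ∫ x, g x ∂ν = 0 by
    filter_upwards [(integral_eq_zero_iff_of_nonneg hg0 hgi).1 hg] with x hx
    exact sub_eq_zero.1 hx
  by_contra hne
  obtain ⟨δ, hδ, hgδ⟩ := (hf.sub_const_mul hf' hk hk0 hk_ub hfi hfi' c).exists_pos_le hk hεm
    hk_lb hk_ub hlam hgi hg0 ((integral_nonneg hg0).lt_of_ne' hne)
  have : c + δ / B ≤ c := le_c _ fun y => by
    calc (c + δ / B) * f' y ≤ c * f' y + δ / B * B := by rw [add_mul]; gcongr; exact hf'B y
      _ = c * f' y + δ := by rw [div_mul_cancel₀ δ hB.ne']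
      _ ≤ f y := by linarith [hgδ y]
  linarith [div_pos hδ hB]

end IsLeftEigenfunction

lemma integral_withDensity_ofReal {ρ : X → ℝ} (hρ : Measurable ρ) (hρ0 : ∀ x, 0 ≤ ρ x)
    (g : X → ℝ) :
    ∫ x, g x ∂ν.withDensity (fun x => ENNReal.ofReal (ρ x)) = ∫ x, ρ x * g x ∂ν := by
  rw [integral_withDensity_eq_integral_toReal_smul hρ.ennreal_ofReal
    (ae_of_all _ fun _ => ENNReal.ofReal_lt_top)]
  simp_rw [ENNReal.toReal_ofReal (hρ0 _), smul_eq_mul]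

lemma integrable_of_eq_withDensity_ofReal {η : Measure X} [IsFiniteMeasure η] {ρ : X → ℝ}
    (hρ : Measurable ρ) (hρ0 : ∀ x, 0 ≤ ρ x)
    (h : η = ν.withDensity fun y => ENNReal.ofReal (ρ y)) : Integrable ρ ν := by
  refine ⟨hρ.aestronglyMeasurable, (hasFiniteIntegral_iff_ofReal (ae_of_all _ hρ0)).2 ?_⟩
  rw [← setLIntegral_univ, ← withDensity_apply _ MeasurableSet.univ, ← h]
  exact measure_lt_top η _

lemma integral_eq_measureReal_univ_of_eq_withDensity_ofReal {η : Measure X} {ρ : X → ℝ}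
    (hρ : Measurable ρ) (hρ0 : ∀ x, 0 ≤ ρ x) (h : η = ν.withDensity fun y => ENNReal.ofReal (ρ y)) :
    ∫ x, ρ x ∂ν = η.real Set.univ := by
  have := integral_withDensity_ofReal (ν := ν) hρ hρ0 fun _ => 1
  rw [← h] at this
  simpa using this.symm

lemma eq_withDensity_of_forall_lintegral_setLIntegral [SFinite ν] {μ ρ : Measure X} [SFinite μ]
    {κ : X → X → ℝ≥0∞} (hκ : Measurable (uncurry κ))
    (h : ∀ A, MeasurableSet A → ∫⁻ x, ∫⁻ y in A, κ x y ∂ν ∂μ = ρ A) :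
    ρ = ν.withDensity fun y => ∫⁻ x, κ x y ∂μ := by
  ext A hA
  rw [← h A hA, withDensity_apply _ hA, lintegral_lintegral_swap hκ.aemeasurable]

variable [SFinite ν] {k : X → X → ℝ} {lam εp : ℝ} {η : Measure X} [IsFiniteMeasure η]

lemma measurable_integral_div (hk : Measurable (uncurry k)) :
    Measurable fun y => (∫ x, k x y ∂η) / lam :=
  (hk.stronglyMeasurable.integral_prod_left' (μ := η)).measurable.div_const lam

lemma eq_withDensity_integral_div_of_eigenmeasure (hk : Measurable (uncurry k))
    (hk0 : ∀ x y, 0 ≤ k x y) (hk_ub : ∀ x y, k x y ≤ εp) (hlam : 0 < lam)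
    (hη : ∀ A, MeasurableSet A →
      ∫⁻ x, ∫⁻ y in A, ENNReal.ofReal (k x y) ∂ν ∂η = ENNReal.ofReal lam * η A) :
    η = ν.withDensity fun y => ENNReal.ofReal ((∫ x, k x y ∂η) / lam) := by
  have hint : ∀ y, Integrable (fun x => k x y) η := fun y =>
    .of_bound hk.of_uncurry_right.aestronglyMeasurable εp
      (ae_of_all _ fun x => (Real.norm_of_nonneg (hk0 x y)).trans_le (hk_ub x y))
  have hlamη : ENNReal.ofReal lam • η = ν.withDensity fun y => ENNReal.ofReal (∫ x, k x y ∂η) := by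
    refine eq_withDensity_of_forall_lintegral_setLIntegral hk.ennreal_ofReal hη |>.trans ?_
    congr 1 with y
    exact (ofReal_integral_eq_lintegral_ofReal (hint y) (ae_of_all _ (hk0 · y))).symm
  have hlam0 : ENNReal.ofReal lam ≠ 0 := ENNReal.ofReal_pos.2 hlam |>.ne'
  calc η = (ENNReal.ofReal lam)⁻¹ • ENNReal.ofReal lam • η := by
        rw [smul_smul, ENNReal.inv_mul_cancel hlam0 ENNReal.ofReal_ne_top, one_smul]
    _ = _ := by
        rw [hlamη, ← withDensity_smul' (ENNReal.ofReal lam)⁻¹ _ (ENNReal.inv_ne_top.2 hlam0)]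
        congr 1 with y
        rw [ENNReal.ofReal_div_of_pos hlam, div_eq_mul_inv, mul_comm]
        rfl

lemma isLeftEigenfunction_integral_div_of_eigenmeasure (hk : Measurable (uncurry k))
    (hk0 : ∀ x y, 0 ≤ k x y) (hk_ub : ∀ x y, k x y ≤ εp) (hlam : 0 < lam)
    (hη : ∀ A, MeasurableSet A →
      ∫⁻ x, ∫⁻ y in A, ENNReal.ofReal (k x y) ∂ν ∂η = ENNReal.ofReal lam * η A) :
    IsLeftEigenfunction ν k lam fun y => (∫ x, k x y ∂η) / lam := by
  intro y
  rw [mul_div_cancel₀ _ hlam.ne']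
  calc ∫ x, k x y ∂η
      = ∫ x, k x y ∂ν.withDensity fun y => ENNReal.ofReal ((∫ x, k x y ∂η) / lam) :=
        congrArg (fun μ => ∫ x, k x y ∂μ)
          (eq_withDensity_integral_div_of_eigenmeasure hk hk0 hk_ub hlam hη)
    _ = _ := integral_withDensity_ofReal (measurable_integral_div hk)
        (fun y => div_nonneg (integral_nonneg (hk0 · y)) hlam.le) _

end KernelEigen

theorem eq_of_eigenmeasure {X : Type*} [MeasurableSpace X] {ν : Measure X} [SFinite ν]
    {k : X → X → ℝ} {lam εm εp : ℝ} {η η' : Measure X} [IsProbabilityMeasure η]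
    [IsProbabilityMeasure η'] (hk : Measurable (uncurry k)) (hεm : 0 < εm)
    (hk_lb : ∀ x y, εm ≤ k x y) (hk_ub : ∀ x y, k x y ≤ εp) (hlam : 0 < lam)
    (hη : ∀ A, MeasurableSet A →
      ∫⁻ x, ∫⁻ y in A, ENNReal.ofReal (k x y) ∂ν ∂η = ENNReal.ofReal lam * η A)
    (hη' : ∀ A, MeasurableSet A →
      ∫⁻ x, ∫⁻ y in A, ENNReal.ofReal (k x y) ∂ν ∂η' = ENNReal.ofReal lam * η' A) :
    η = η' := by
  have hk0 : ∀ x y, 0 ≤ k x y := fun x y => hεm.le.trans (hk_lb x y)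
  have hρη := eq_withDensity_integral_div_of_eigenmeasure hk hk0 hk_ub hlam hη
  have hρη' := eq_withDensity_integral_div_of_eigenmeasure hk hk0 hk_ub hlam hη'
  have hρ0 : ∀ (μ : Measure X) y, 0 ≤ (∫ x, k x y ∂μ) / lam := fun μ y =>
    div_nonneg (integral_nonneg (hk0 · y)) hlam.le
  have hmass := integral_eq_measureReal_univ_of_eq_withDensity_ofReal
    (measurable_integral_div hk) (hρ0 η) hρη
  have hmass' := integral_eq_measureReal_univ_of_eq_withDensity_ofReal
    (measurable_integral_div hk) (hρ0 η') hρη'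
  simp only [probReal_univ] at hmass hmass'
  have hev := isLeftEigenfunction_integral_div_of_eigenmeasure hk hk0 hk_ub hlam hη
  have hev' := isLeftEigenfunction_integral_div_of_eigenmeasure hk hk0 hk_ub hlam hη'
  obtain ⟨c, -, hc⟩ := hev.exists_pos_ae_eq_const_mul hev' hk hεm hk_lb hk_ub hlam
    (integrable_of_eq_withDensity_ofReal (measurable_integral_div hk) (hρ0 η) hρη)
    (integrable_of_eq_withDensity_ofReal (measurable_integral_div hk) (hρ0 η') hρη')
    (hρ0 η) (hρ0 η') (by rw [hmass]; exact one_pos) (by rw [hmass']; exact one_pos)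
  have hc1 : c = 1 := by
    simpa [hmass, hmass', integral_const_mul] using (integral_congr_ae hc).symm
  rw [hρη, hρη']
  exact withDensity_congr_ae (hc.mono fun y hy => by simp only at hy ⊢; rw [hy, hc1, one_mul])

lemma Qop_eq_integral_mul {X : Type*} [MeasurableSpace X] {G : X → ℝ} {M : Kernel X X}
    {ν : Measure X} {q : X → X → ℝ} {x : X} (hG : 0 ≤ G x) (hq : Measurable (q x))
    (hq0 : ∀ y, 0 ≤ q x y)
    (hH : ∀ A, MeasurableSet A →
      ENNReal.ofReal (G x) * M x A = ∫⁻ y in A, ENNReal.ofReal (q x y) ∂ν)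
    (φ : X → ℝ) : Qop G M φ x = ∫ y, φ y * q x y ∂ν := by
  have hMx : ENNReal.ofReal (G x) • M x = ν.withDensity fun y => ENNReal.ofReal (q x y) := by
    ext A hA
    rw [Measure.smul_apply, smul_eq_mul, withDensity_apply _ hA, hH A hA]
  rw [Qop, ← ENNReal.toReal_ofReal hG, ← smul_eq_mul, ← integral_smul_measure, hMx,
    integral_withDensity_ofReal hq hq0]
  simp_rw [mul_comm]

theorem stmt4_general {X : Type*} [MeasurableSpace X]
    (G : X → ℝ) (M : Kernel X X)
    (ν : Measure X) [IsProbabilityMeasure ν]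
    (q : X → X → ℝ) (εm εp : ℝ)
    (hq_meas : Measurable fun p : X × X => q p.1 p.2)
    (hεm_pos : 0 < εm)
    (hq_lb : ∀ x y, εm ≤ q x y) (hq_ub : ∀ x y, q x y ≤ εp)
    (hG_pos : ∀ x, 0 < G x)
    (hH : ∀ x (A : Set X), MeasurableSet A →
      ENNReal.ofReal (G x) * M x A = ∫⁻ y in A, ENNReal.ofReal (q x y) ∂ν)
    (Λ : ℝ) :
    (∀ (η η' : Measure X), IsProbabilityMeasure η → IsProbabilityMeasure η' →
      (∀ A : Set X, MeasurableSet A →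
        ∫⁻ x, ENNReal.ofReal (G x) * M x A ∂η = ENNReal.ofReal (Real.exp Λ) * η A) →
      (∀ A : Set X, MeasurableSet A →
        ∫⁻ x, ENNReal.ofReal (G x) * M x A ∂η' = ENNReal.ofReal (Real.exp Λ) * η' A) →
      η = η') ∧
    (∀ h h' : X → ℝ, Measurable h → Measurable h' →
      (∀ x, 0 ≤ h x) → (∀ x, 0 ≤ h' x) →
      (∃ c, ∀ x, h x ≤ c) → (∃ c, ∀ x, h' x ≤ c) →
      ¬ (h =ᵐ[ν] fun _ => (0 : ℝ)) → ¬ (h' =ᵐ[ν] fun _ => (0 : ℝ)) →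
      (∀ x, Qop G M h x = Real.exp Λ * h x) →
      (∀ x, Qop G M h' x = Real.exp Λ * h' x) →
      ∃ c : ℝ, 0 < c ∧ h =ᵐ[ν] fun x => c * h' x) := by
  have hq0 : ∀ x y, 0 ≤ q x y := fun x y => hεm_pos.le.trans (hq_lb x y)
  have hlam : 0 < Real.exp Λ := Real.exp_pos Λ
  refine ⟨fun η η' _ _ hη hη' => ?_, fun h h' hm hm' hnn hnn' hbd hbd' hne hne' hQ hQ' => ?_⟩
  · exact eq_of_eigenmeasure hq_meas hεm_pos hq_lb hq_ub hlam
      (fun A hA => (lintegral_congr fun x => (hH x A hA).symm).trans (hη A hA))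
      (fun A hA => (lintegral_congr fun x => (hH x A hA).symm).trans (hη' A hA))
  · have heig : ∀ {f : X → ℝ}, (∀ x, Qop G M f x = Real.exp Λ * f x) →
        IsLeftEigenfunction ν (fun x y => q y x) (Real.exp Λ) f := fun hf y => by
      rw [← hf y, Qop_eq_integral_mul (hG_pos y).le hq_meas.of_uncurry_left (hq0 y) (hH y)]
    have hint : ∀ {f : X → ℝ}, Measurable f → (∀ x, 0 ≤ f x) → (∃ c, ∀ x, f x ≤ c) →
        Integrable f ν := fun hf hf0 ⟨c, hc⟩ =>
      .of_bound hf.aestronglyMeasurable c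
        (ae_of_all _ fun x => (Real.norm_of_nonneg (hf0 x)).trans_le (hc x))
    have hpos : ∀ {f : X → ℝ}, (∀ x, 0 ≤ f x) → Integrable f ν →
        ¬ (f =ᵐ[ν] fun _ => (0 : ℝ)) → 0 < ∫ x, f x ∂ν := fun hf0 hfi hne =>
      (integral_nonneg hf0).lt_of_ne' (mt (integral_eq_zero_iff_of_nonneg hf0 hfi).1 hne)
    exact (heig hQ).exists_pos_ae_eq_const_mul (heig hQ') (hq_meas.comp measurable_swap)
      hεm_pos (fun x y => hq_lb y x) (fun x y => hq_ub y x) hlam (hint hm hnn hbd)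
      (hint hm' hnn' hbd') hnn hnn' (hpos hnn (hint hm hnn hbd) hne)
      (hpos hnn' (hint hm' hnn' hbd') hne')

theorem stmt4 {X : Type*} [MeasurableSpace X]
    (G : X → ℝ) (M : Kernel X X) [IsMarkovKernel M]
    (ν : Measure X) [IsProbabilityMeasure ν]
    (q : X → X → ℝ) (εm εp : ℝ)
    (hq_meas : Measurable fun p : X × X => q p.1 p.2)
    (hεm_pos : 0 < εm) (hεle : εm ≤ εp)
    (hq_lb : ∀ x y, εm ≤ q x y) (hq_ub : ∀ x y, q x y ≤ εp)
    (hG_meas : Measurable G) (hG_pos : ∀ x, 0 < G x) (hG_bdd : ∃ c, ∀ x, G x ≤ c)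
    (hH : ∀ x (A : Set X), MeasurableSet A →
      ENNReal.ofReal (G x) * M x A = ∫⁻ y in A, ENNReal.ofReal (q x y) ∂ν)
    (Λ : ℝ)
    (hΛ : Tendsto (fun n : ℕ => (n : ℝ)⁻¹ *
        Real.log (∫ x, Qiter G M n (fun _ => (1 : ℝ)) x ∂ν)) atTop (nhds Λ)) :
    (∀ (η η' : Measure X), IsProbabilityMeasure η → IsProbabilityMeasure η' →
      (∀ A : Set X, MeasurableSet A →
        ∫⁻ x, ENNReal.ofReal (G x) * M x A ∂η = ENNReal.ofReal (Real.exp Λ) * η A) →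
      (∀ A : Set X, MeasurableSet A →
        ∫⁻ x, ENNReal.ofReal (G x) * M x A ∂η' = ENNReal.ofReal (Real.exp Λ) * η' A) →
      η = η') ∧
    (∀ h h' : X → ℝ, Measurable h → Measurable h' →
      (∀ x, 0 ≤ h x) → (∀ x, 0 ≤ h' x) →
      (∃ c, ∀ x, h x ≤ c) → (∃ c, ∀ x, h' x ≤ c) →
      ¬ (h =ᵐ[ν] fun _ => (0 : ℝ)) → ¬ (h' =ᵐ[ν] fun _ => (0 : ℝ)) →
      (∀ x, Qop G M h x = Real.exp Λ * h x) →
      (∀ x, Qop G M h' x = Real.exp Λ * h' x) →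
      ∃ c : ℝ, 0 < c ∧ h =ᵐ[ν] fun x => c * h' x) :=
  stmt4_general G M ν q εm εp hq_meas hεm_pos hq_lb hq_ub hG_pos hH Λ
end

section
/- Under assumption (H), given a principal eigen-triple (λ⋆, η⋆, h⋆), for every initial probability measure μ and every n ≥ 0 the normalized flow satisfies ‖η_n − η⋆‖ ≤ ρ^n · 4(ε⁺/ε⁻)³, where ρ := 1 − ε⁻/ε⁺ and ‖·‖ is the total variation norm; the bound does not depend on μ. -/
open MeasureTheory ProbabilityTheory Filter
open scoped ENNReal

/-- `η_n(φ)` where `η_0 := μ` and `η_n := μQ^{(n)} / μQ^{(n)}(1)`. -/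
noncomputable def etaInt {X : Type*} [MeasurableSpace X] (G : X → ℝ) (M : Kernel X X)
    (μ : Measure X) (n : ℕ) (φ : X → ℝ) : ℝ :=
  (∫ x, Qiter G M n φ x ∂μ) / ∫ x, Qiter G M n (fun _ => (1 : ℝ)) x ∂μ

/-- `h_{p,n}(x) := Q^{(n−p)}(1)(x) / η_p Q^{(n−p)}(1)` (which equals `1` when `p = n`). -/
noncomputable def hpn {X : Type*} [MeasurableSpace X] (G : X → ℝ) (M : Kernel X X)
    (μ : Measure X) (p n : ℕ) (x : X) : ℝ :=
  Qiter G M (n - p) (fun _ => (1 : ℝ)) x /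
    etaInt G M μ p (Qiter G M (n - p) (fun _ => (1 : ℝ)))

/-!
Write `T φ x = ∫ q x y φ y ∂ν`, so that `Q = T`. For `g > 0`, the probability densities
`y ↦ q x y g y / T g x` all dominate `(εm / εp) g / ∫ g` (Doeblin's condition), because
`εm ≤ q ≤ εp`. Splitting off this common part shows: if `ψ` lies within `r` of a constant, then
`T (ψ g) / T g` lies within `(1 - εm / εp) r` of another one; by induction `Qⁿ φ / Qⁿ 1` lies
within `ρⁿ` of some constant `c`. Both `η_n(φ) = μ(Qⁿ φ) / μ(Qⁿ 1)` and, since `η⋆ Q = λ⋆ η⋆`,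
`η⋆(φ) = η⋆(Qⁿ φ) / η⋆(Qⁿ 1)` are averages of `Qⁿ φ / Qⁿ 1` against the weight `Qⁿ 1`, hence
both lie within `ρⁿ` of `c`.
-/

open Function

section

variable {X : Type*} [MeasurableSpace X]

theorem integral_pos_of_forall_pos {μ : Measure X} [NeZero μ] {g : X → ℝ}
    (hg : Integrable g μ) (hg_pos : ∀ y, 0 < g y) : 0 < ∫ y, g y ∂μ := by
  rw [integral_pos_iff_support_of_nonneg (fun y => (hg_pos y).le) hg,
    support_eq_univ fun y => (hg_pos y).ne']
  exact Measure.measure_univ_pos.2 (NeZero.ne μ)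

theorem abs_integral_mul_le {μ : Measure X} {k f : X → ℝ} {r : ℝ} (hk : Integrable k μ)
    (hk0 : ∀ y, 0 ≤ k y) (hfr : ∀ y, |f y| ≤ r) :
    |∫ y, k y * f y ∂μ| ≤ (∫ y, k y ∂μ) * r := by
  rw [← integral_mul_const r k, ← Real.norm_eq_abs]
  refine norm_integral_le_of_norm_le (hk.mul_const r) (Eventually.of_forall fun y => ?_)
  rw [Real.norm_eq_abs, abs_mul, abs_of_nonneg (hk0 y)]
  exact mul_le_mul_of_nonneg_left (hfr y) (hk0 y)

theorem abs_integral_div_integral_sub_le {μ : Measure X} [NeZero μ] {u g : X → ℝ} {c r : ℝ}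
    (hu : AEStronglyMeasurable u μ) (hg : Integrable g μ) (hg_pos : ∀ y, 0 < g y)
    (hugc : ∀ y, |u y / g y - c| ≤ r) :
    |(∫ y, u y ∂μ) / (∫ y, g y ∂μ) - c| ≤ r := by
  have hI := integral_pos_of_forall_pos hg hg_pos
  have hgf : Integrable (fun y => g y * (u y / g y - c)) μ :=
    hg.mul_bdd ((hu.div₀ hg.1).sub aestronglyMeasurable_const)
      (Eventually.of_forall fun y => (Real.norm_eq_abs _).trans_le (hugc y))
  have hu_eq : ∀ y, u y = g y * (u y / g y - c) + c * g y := fun y => by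
    field_simp [(hg_pos y).ne']
    ring
  have key : (∫ y, u y ∂μ) - c * ∫ y, g y ∂μ = ∫ y, g y * (u y / g y - c) ∂μ := by
    rw [integral_congr_ae (Eventually.of_forall hu_eq), integral_add hgf (hg.const_mul c),
      integral_const_mul]
    ring
  rw [div_sub' hI.ne', abs_div, abs_of_pos hI, div_le_iff₀ hI, mul_comm _ c, key, mul_comm r]
  exact abs_integral_mul_le hg (fun y => (hg_pos y).le) hugc

theorem abs_integral_mul_sub_le_of_minorization {ν : Measure X} {k p ψ : X → ℝ} {α c r : ℝ}
    (hk : Integrable k ν) (hp : Integrable p ν) (hψ : AEStronglyMeasurable ψ ν)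
    (hk1 : ∫ y, k y ∂ν = 1) (hp1 : ∫ y, p y ∂ν = 1) (hpk : ∀ y, α * p y ≤ k y)
    (hψc : ∀ y, |ψ y - c| ≤ r) :
    |∫ y, k y * ψ y ∂ν - (c + α * ∫ y, p y * (ψ y - c) ∂ν)| ≤ (1 - α) * r := by
  have hf : AEStronglyMeasurable (fun y => ψ y - c) ν := hψ.sub aestronglyMeasurable_const
  have hfr : ∀ᵐ y ∂ν, ‖ψ y - c‖ ≤ r :=
    Eventually.of_forall fun y => (Real.norm_eq_abs _).trans_le (hψc y)
  have hres : Integrable (fun y => k y - α * p y) ν := hk.sub (hp.const_mul α)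
  have hresf := hres.mul_bdd hf hfr
  have hpf := (hp.mul_bdd hf hfr).const_mul α
  have hpkf : Integrable (fun y => α * (p y * (ψ y - c)) + c * k y) ν :=
    hpf.add (hk.const_mul c)
  have hkψ_eq : ∀ y, k y * ψ y
      = (k y - α * p y) * (ψ y - c) + (α * (p y * (ψ y - c)) + c * k y) := fun y => by ring
  have key : ∫ y, k y * ψ y ∂ν - (c + α * ∫ y, p y * (ψ y - c) ∂ν)
      = ∫ y, (k y - α * p y) * (ψ y - c) ∂ν := by
    rw [integral_congr_ae (Eventually.of_forall hkψ_eq), integral_add hresf hpkf,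
      integral_add hpf (hk.const_mul c), integral_const_mul, integral_const_mul, hk1]
    ring
  have hmass : ∫ y, (k y - α * p y) ∂ν = 1 - α := by
    rw [integral_sub hk (hp.const_mul α), integral_const_mul, hk1, hp1, mul_one]
  rw [key, ← hmass]
  exact abs_integral_mul_le hres (fun y => sub_nonneg.2 (hpk y)) hψc

noncomputable def integralOp (ν : Measure X) (q : X → X → ℝ) (φ : X → ℝ) (x : X) : ℝ :=
  ∫ y, q x y * φ y ∂ν

section IntegralOp

variable {ν : Measure X} {q : X → X → ℝ} {εm εp : ℝ}

theorem measurable_integralOp [SFinite ν] (hq : Measurable (uncurry q)) {φ : X → ℝ}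
    (hφ : Measurable φ) : Measurable (integralOp ν q φ) :=
  (hq.mul (hφ.comp measurable_snd)).stronglyMeasurable.integral_prod_right'.measurable

theorem measurable_iterate_integralOp [SFinite ν] (hq : Measurable (uncurry q)) {φ : X → ℝ}
    (hφ : Measurable φ) (n : ℕ) : Measurable ((integralOp ν q)^[n] φ) := by
  induction n with
  | zero => exact hφ
  | succ n ih => rw [iterate_succ_apply']; exact measurable_integralOp hq ih

theorem integrable_density_mul (hq : Measurable (uncurry q)) (hq0 : ∀ x y, 0 ≤ q x y)
    (hq_ub : ∀ x y, q x y ≤ εp) {g : X → ℝ} (hg : Integrable g ν) (x : X) :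
    Integrable (fun y => q x y * g y) ν :=
  hg.bdd_mul (hq.comp measurable_prodMk_left).aestronglyMeasurable
    (Eventually.of_forall fun y => by
      rw [Real.norm_eq_abs, abs_of_nonneg (hq0 x y)]
      exact hq_ub x y)

variable [IsProbabilityMeasure ν]

theorem abs_integralOp_le (hq0 : ∀ x y, 0 ≤ q x y) (hq_ub : ∀ x y, q x y ≤ εp) {φ : X → ℝ}
    {C : ℝ} (hφ : ∀ y, |φ y| ≤ C) (x : X) : |integralOp ν q φ x| ≤ εp * C := by
  rw [← Real.norm_eq_abs]
  calc ‖integralOp ν q φ x‖ ≤ ∫ _y, εp * C ∂ν :=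
        norm_integral_le_of_norm_le (integrable_const _) (Eventually.of_forall fun y => by
          rw [Real.norm_eq_abs, abs_mul, abs_of_nonneg (hq0 x y)]
          exact mul_le_mul (hq_ub x y) (hφ y) (abs_nonneg _) ((hq0 x y).trans (hq_ub x y)))
    _ = εp * C := by simp

theorem abs_iterate_integralOp_le (hq0 : ∀ x y, 0 ≤ q x y) (hq_ub : ∀ x y, q x y ≤ εp)
    {φ : X → ℝ} {C : ℝ} (hφ : ∀ y, |φ y| ≤ C) (n : ℕ) (x : X) :
    |(integralOp ν q)^[n] φ x| ≤ εp ^ n * C := by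
  induction n generalizing x with
  | zero => simpa using hφ x
  | succ n ih =>
    rw [iterate_succ_apply', pow_succ', mul_assoc]
    exact abs_integralOp_le hq0 hq_ub ih x

theorem integrable_iterate_integralOp {μ : Measure X} [IsFiniteMeasure μ]
    (hq : Measurable (uncurry q)) (hq0 : ∀ x y, 0 ≤ q x y) (hq_ub : ∀ x y, q x y ≤ εp)
    {φ : X → ℝ} {C : ℝ} (hφ : Measurable φ) (hφC : ∀ y, |φ y| ≤ C) (n : ℕ) :
    Integrable ((integralOp ν q)^[n] φ) μ :=
  .of_bound (measurable_iterate_integralOp hq hφ n).aestronglyMeasurable _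
    (Eventually.of_forall (abs_iterate_integralOp_le hq0 hq_ub hφC n))

theorem pow_le_iterate_integralOp_one (hq : Measurable (uncurry q)) (hεm : 0 ≤ εm)
    (hq_lb : ∀ x y, εm ≤ q x y) (hq_ub : ∀ x y, q x y ≤ εp) (n : ℕ) (x : X) :
    εm ^ n ≤ (integralOp ν q)^[n] (fun _ => 1) x := by
  have hq0 : ∀ x y, 0 ≤ q x y := fun x y => hεm.trans (hq_lb x y)
  induction n generalizing x with
  | zero => simp
  | succ n ih =>
    have hg := integrable_iterate_integralOp (ν := ν) (μ := ν) hq hq0 hq_ub measurable_const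
      (fun _ => abs_one.le) n
    rw [iterate_succ_apply', pow_succ']
    calc εm * εm ^ n = ∫ _y, εm * εm ^ n ∂ν := by simp
      _ ≤ integralOp ν q ((integralOp ν q)^[n] fun _ => 1) x :=
        integral_mono (integrable_const _) (integrable_density_mul hq hq0 hq_ub hg x)
          fun y => mul_le_mul (hq_lb x y) (ih y) (pow_nonneg hεm n) (hq0 x y)

theorem iterate_integralOp_one_pos (hq : Measurable (uncurry q)) (hεm : 0 < εm)
    (hq_lb : ∀ x y, εm ≤ q x y) (hq_ub : ∀ x y, q x y ≤ εp) (n : ℕ) (x : X) :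
    0 < (integralOp ν q)^[n] (fun _ => 1) x :=
  (pow_pos hεm n).trans_le (pow_le_iterate_integralOp_one hq hεm.le hq_lb hq_ub n x)

end IntegralOp

section Contraction

variable {ν : Measure X} [IsProbabilityMeasure ν] {q : X → X → ℝ} {εm εp : ℝ}
  (hq : Measurable (uncurry q)) (hεm : 0 < εm)
  (hq_lb : ∀ x y, εm ≤ q x y) (hq_ub : ∀ x y, q x y ≤ εp)
include hq hεm hq_lb hq_ub

theorem exists_abs_integralOp_mul_div_sub_le {g ψ : X → ℝ} {c r : ℝ} (hg : Integrable g ν)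
    (hg_pos : ∀ y, 0 < g y) (hψ : AEStronglyMeasurable ψ ν) (hψc : ∀ y, |ψ y - c| ≤ r) :
    ∃ c', ∀ x, |integralOp ν q (fun y => ψ y * g y) x / integralOp ν q g x - c'|
      ≤ (1 - εm / εp) * r := by
  have hq0 : ∀ x y, 0 ≤ q x y := fun x y => hεm.le.trans (hq_lb x y)
  set I := ∫ y, g y ∂ν
  have hI : 0 < I := integral_pos_of_forall_pos hg hg_pos
  have hqg := integrable_density_mul hq hq0 hq_ub hg
  have hZ_le : ∀ x, integralOp ν q g x ≤ εp * I := fun x => by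
    rw [← integral_const_mul]
    exact integral_mono (hqg x) (hg.const_mul εp)
      fun y => mul_le_mul_of_nonneg_right (hq_ub x y) (hg_pos y).le
  have hZ_ge : ∀ x, εm * I ≤ integralOp ν q g x := fun x => by
    rw [← integral_const_mul]
    exact integral_mono (hg.const_mul εm) (hqg x)
      fun y => mul_le_mul_of_nonneg_right (hq_lb x y) (hg_pos y).le
  refine ⟨c + εm / εp * ∫ y, g y / I * (ψ y - c) ∂ν, fun x => ?_⟩
  set Z := integralOp ν q g x
  have hZ : 0 < Z := (mul_pos hεm hI).trans_le (hZ_ge x)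
  have hpk : ∀ y, εm / εp * (g y / I) ≤ q x y * g y / Z := fun y => by
    have hεp : 0 < εp := hεm.trans_le ((hq_lb x y).trans (hq_ub x y))
    rw [div_mul_div_comm, div_le_div_iff₀ (mul_pos hεp hI) hZ]
    calc εm * g y * Z ≤ εm * g y * (εp * I) :=
          mul_le_mul_of_nonneg_left (hZ_le x) (mul_nonneg hεm.le (hg_pos y).le)
      _ ≤ q x y * g y * (εp * I) :=
          mul_le_mul_of_nonneg_right (mul_le_mul_of_nonneg_right (hq_lb x y) (hg_pos y).le)
            (mul_pos hεp hI).le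
  have key := abs_integral_mul_sub_le_of_minorization ((hqg x).div_const Z) (hg.div_const I) hψ
    (by rw [integral_div]; exact div_self hZ.ne') (by rw [integral_div]; exact div_self hI.ne')
    hpk hψc
  have hkψ : ∫ y, q x y * g y / Z * ψ y ∂ν = integralOp ν q (fun y => ψ y * g y) x / Z := by
    rw [integralOp, ← integral_div]
    exact integral_congr_ae (Eventually.of_forall fun y => by ring)
  rwa [hkψ] at key

theorem exists_abs_iterate_integralOp_div_sub_le {φ : X → ℝ} {c r : ℝ} (hφ : Measurable φ)
    (hφc : ∀ y, |φ y - c| ≤ r) (n : ℕ) :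
    ∃ c', ∀ x, |(integralOp ν q)^[n] φ x / (integralOp ν q)^[n] (fun _ => 1) x - c'|
      ≤ (1 - εm / εp) ^ n * r := by
  induction n with
  | zero => exact ⟨c, by simpa using hφc⟩
  | succ n ih =>
    obtain ⟨c', hc'⟩ := ih
    set g := (integralOp ν q)^[n] (fun _ => 1)
    have hg_pos := iterate_integralOp_one_pos (ν := ν) hq hεm hq_lb hq_ub n
    have hφn : (integralOp ν q)^[n] φ = fun y => (integralOp ν q)^[n] φ y / g y * g y :=
      funext fun y => (div_mul_cancel₀ _ (hg_pos y).ne').symm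
    have hψ : Measurable fun y => (integralOp ν q)^[n] φ y / g y :=
      (measurable_iterate_integralOp hq hφ n).div
        (measurable_iterate_integralOp hq measurable_const n)
    have hg : Integrable g ν := integrable_iterate_integralOp hq
      (fun x y => hεm.le.trans (hq_lb x y)) hq_ub measurable_const (fun _ => abs_one.le) n
    obtain ⟨c'', hc''⟩ := exists_abs_integralOp_mul_div_sub_le hq hεm hq_lb hq_ub hg hg_pos
      hψ.aestronglyMeasurable hc'
    refine ⟨c'', fun x => ?_⟩
    rw [iterate_succ_apply', iterate_succ_apply', hφn, pow_succ', mul_assoc]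
    exact hc'' x

end Contraction

section DensityKernel

variable {ν : Measure X} [SFinite ν] {q : X → X → ℝ}

noncomputable def densityKernel (ν : Measure X) [SFinite ν] (q : X → X → ℝ) : Kernel X X :=
  (Kernel.const X ν).withDensity fun x y => ENNReal.ofReal (q x y)

theorem densityKernel_apply (hq : Measurable (uncurry q)) (x : X) :
    densityKernel ν q x = ν.withDensity fun y => ENNReal.ofReal (q x y) := by
  rw [densityKernel, Kernel.withDensity_apply _ hq.ennreal_ofReal, Kernel.const_apply]

theorem integral_densityKernel (hq : Measurable (uncurry q)) (hq0 : ∀ x y, 0 ≤ q x y)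
    (φ : X → ℝ) (x : X) : ∫ y, φ y ∂densityKernel ν q x = integralOp ν q φ x := by
  have hqx : Measurable (q x) := hq.comp measurable_prodMk_left
  rw [densityKernel_apply hq, integral_withDensity_eq_integral_toReal_smul hqx.ennreal_ofReal
    (Eventually.of_forall fun _ => ENNReal.ofReal_lt_top)]
  exact integral_congr_ae (Eventually.of_forall fun y => by
    simp [ENNReal.toReal_ofReal (hq0 x y)])

theorem integral_integralOp_eq_of_comp_eq (hq : Measurable (uncurry q))
    (hq0 : ∀ x y, 0 ≤ q x y) {ηs : Measure X} {lam : ℝ} (hlam : 0 ≤ lam)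
    (hcomp : densityKernel ν q ∘ₘ ηs = ENNReal.ofReal lam • ηs) {φ : X → ℝ}
    (hφ : Integrable φ ηs) :
    ∫ x, integralOp ν q φ x ∂ηs = lam * ∫ x, φ x ∂ηs := by
  have hφ' : Integrable φ (densityKernel ν q ∘ₘ ηs) := by
    rw [hcomp]; exact hφ.smul_measure ENNReal.ofReal_ne_top
  calc ∫ x, integralOp ν q φ x ∂ηs = ∫ x, ∫ y, φ y ∂densityKernel ν q x ∂ηs := by
        simp_rw [integral_densityKernel hq hq0]
    _ = ∫ y, φ y ∂(densityKernel ν q ∘ₘ ηs) := by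
        rw [Measure.comp_eq_comp_const_apply, Kernel.integral_comp]
        · simp
        · rwa [← Measure.comp_eq_comp_const_apply]
    _ = lam * ∫ x, φ x ∂ηs := by
        rw [hcomp, integral_smul_measure, ENNReal.toReal_ofReal hlam, smul_eq_mul]

theorem integral_iterate_integralOp_eq_of_comp_eq [IsProbabilityMeasure ν]
    (hq : Measurable (uncurry q)) (hq0 : ∀ x y, 0 ≤ q x y) {εp : ℝ}
    (hq_ub : ∀ x y, q x y ≤ εp) {ηs : Measure X} [IsFiniteMeasure ηs] {lam : ℝ} (hlam : 0 ≤ lam)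
    (hcomp : densityKernel ν q ∘ₘ ηs = ENNReal.ofReal lam • ηs) {φ : X → ℝ} {C : ℝ}
    (hφ : Measurable φ) (hφC : ∀ y, |φ y| ≤ C) (n : ℕ) :
    ∫ x, (integralOp ν q)^[n] φ x ∂ηs = lam ^ n * ∫ x, φ x ∂ηs := by
  induction n with
  | zero => simp
  | succ n ih =>
    rw [iterate_succ_apply', integral_integralOp_eq_of_comp_eq hq hq0 hlam hcomp
      (integrable_iterate_integralOp hq hq0 hq_ub hφ hφC n), ih, pow_succ', mul_assoc]

theorem integral_iterate_div_integral_iterate_one [IsProbabilityMeasure ν]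
    (hq : Measurable (uncurry q)) (hq0 : ∀ x y, 0 ≤ q x y) {εp : ℝ}
    (hq_ub : ∀ x y, q x y ≤ εp) {ηs : Measure X} [IsProbabilityMeasure ηs] {lam : ℝ}
    (hlam : 0 < lam) (hcomp : densityKernel ν q ∘ₘ ηs = ENNReal.ofReal lam • ηs) {φ : X → ℝ}
    {C : ℝ} (hφ : Measurable φ) (hφC : ∀ y, |φ y| ≤ C) (n : ℕ) :
    (∫ x, (integralOp ν q)^[n] φ x ∂ηs) / (∫ x, (integralOp ν q)^[n] (fun _ => 1) x ∂ηs)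
      = ∫ x, φ x ∂ηs := by
  rw [integral_iterate_integralOp_eq_of_comp_eq hq hq0 hq_ub hlam.le hcomp hφ hφC,
    integral_iterate_integralOp_eq_of_comp_eq hq hq0 hq_ub hlam.le hcomp measurable_const
      (fun _ => abs_one.le),
    integral_const, probReal_univ, one_smul, mul_one,
    mul_div_cancel_left₀ _ (pow_ne_zero n hlam.ne')]

variable {G : X → ℝ} {M : Kernel X X}
  (hH : ∀ x (A : Set X), MeasurableSet A →
    ENNReal.ofReal (G x) * M x A = ∫⁻ y in A, ENNReal.ofReal (q x y) ∂ν)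
include hH

theorem smul_eq_densityKernel (hq : Measurable (uncurry q)) (x : X) :
    ENNReal.ofReal (G x) • M x = densityKernel ν q x := by
  ext A hA
  rw [Measure.smul_apply, smul_eq_mul, hH x A hA, densityKernel_apply hq, withDensity_apply _ hA]

theorem Qop_eq_integralOp (hq : Measurable (uncurry q)) (hq0 : ∀ x y, 0 ≤ q x y)
    (hG0 : ∀ x, 0 ≤ G x) : Qop G M = integralOp ν q := by
  funext φ x
  rw [Qop, ← integral_densityKernel hq hq0, ← smul_eq_densityKernel hH hq,
    integral_smul_measure, ENNReal.toReal_ofReal (hG0 x), smul_eq_mul]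

theorem densityKernel_comp_eq (hq : Measurable (uncurry q)) {ηs : Measure X} {lam : ℝ}
    (h_meas_eq : ∀ A : Set X, MeasurableSet A →
      ∫⁻ x, ENNReal.ofReal (G x) * M x A ∂ηs = ENNReal.ofReal lam * ηs A) :
    densityKernel ν q ∘ₘ ηs = ENNReal.ofReal lam • ηs := by
  ext A hA
  rw [Measure.bind_apply hA (Kernel.aemeasurable _), Measure.smul_apply, smul_eq_mul,
    ← h_meas_eq A hA]
  refine lintegral_congr fun x => ?_
  rw [← smul_eq_densityKernel hH hq, Measure.smul_apply, smul_eq_mul]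

end DensityKernel

theorem Qiter_eq_iterate {G : X → ℝ} {M : Kernel X X} {T : (X → ℝ) → X → ℝ}
    (hQ : Qop G M = T) (n : ℕ) : Qiter G M n = T^[n] := by
  induction n with
  | zero => rfl
  | succ n ih => funext φ; rw [Qiter, ih, hQ, iterate_succ_apply']

end

theorem stmt9_general {X : Type*} [MeasurableSpace X]
    (G : X → ℝ) (M : Kernel X X)
    (ν : Measure X) [IsProbabilityMeasure ν]
    (q : X → X → ℝ) (εm εp : ℝ)
    (hq_meas : Measurable fun p : X × X => q p.1 p.2)
    (hεm_pos : 0 < εm) (hεle : εm ≤ εp)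
    (hq_lb : ∀ x y, εm ≤ q x y) (hq_ub : ∀ x y, q x y ≤ εp)
    (hG_pos : ∀ x, 0 < G x)
    (hH : ∀ x (A : Set X), MeasurableSet A →
      ENNReal.ofReal (G x) * M x A = ∫⁻ y in A, ENNReal.ofReal (q x y) ∂ν)
    (lam : ℝ) (hlam_pos : 0 < lam)
    (ηs : Measure X) [IsProbabilityMeasure ηs]
    (h_meas_eq : ∀ A : Set X, MeasurableSet A →
      ∫⁻ x, ENNReal.ofReal (G x) * M x A ∂ηs = ENNReal.ofReal lam * ηs A)
    (μ : Measure X) [IsProbabilityMeasure μ] :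
    ∀ n : ℕ, ∀ φ : X → ℝ, Measurable φ → (∀ y, |φ y| ≤ 1) →
      |etaInt G M μ n φ - ∫ y, φ y ∂ηs| ≤ (1 - εm / εp) ^ n * (4 * (εp / εm) ^ 3) := by
  intro n φ hφ hφ1
  have hq0 : ∀ x y, 0 ≤ q x y := fun x y => hεm_pos.le.trans (hq_lb x y)
  obtain ⟨c, hc⟩ := exists_abs_iterate_integralOp_div_sub_le (ν := ν) hq_meas hεm_pos hq_lb
    hq_ub hφ (c := 0) (by simpa using hφ1) n
  have hclose (ρ : Measure X) [IsProbabilityMeasure ρ] :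
      |(∫ x, (integralOp ν q)^[n] φ x ∂ρ) / (∫ x, (integralOp ν q)^[n] (fun _ => 1) x ∂ρ) - c|
        ≤ (1 - εm / εp) ^ n * 1 :=
    abs_integral_div_integral_sub_le
      (measurable_iterate_integralOp hq_meas hφ n).aestronglyMeasurable
      (integrable_iterate_integralOp hq_meas hq0 hq_ub measurable_const (fun _ => abs_one.le) n)
      (iterate_integralOp_one_pos hq_meas hεm_pos hq_lb hq_ub n) hc
  have hμ := hclose μ
  have hηs := hclose ηs
  rw [integral_iterate_div_integral_iterate_one hq_meas hq0 hq_ub hlam_pos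
    (densityKernel_comp_eq hH hq_meas h_meas_eq) hφ hφ1] at hηs
  rw [etaInt, Qiter_eq_iterate (Qop_eq_integralOp hH hq_meas hq0 fun x => (hG_pos x).le)]
  have hρ : 0 ≤ 1 - εm / εp := sub_nonneg.2 ((div_le_one (hεm_pos.trans_le hεle)).2 hεle)
  have hκ : 1 ≤ (εp / εm) ^ 3 := one_le_pow₀ ((one_le_div hεm_pos).2 hεle)
  refine (abs_sub_le _ c _).trans ?_
  rw [abs_sub_comm c]
  nlinarith [pow_nonneg hρ n]

theorem stmt9 {X : Type*} [MeasurableSpace X]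
    (G : X → ℝ) (M : Kernel X X) [IsMarkovKernel M]
    (ν : Measure X) [IsProbabilityMeasure ν]
    (q : X → X → ℝ) (εm εp : ℝ)
    (hq_meas : Measurable fun p : X × X => q p.1 p.2)
    (hεm_pos : 0 < εm) (hεle : εm ≤ εp)
    (hq_lb : ∀ x y, εm ≤ q x y) (hq_ub : ∀ x y, q x y ≤ εp)
    (hG_meas : Measurable G) (hG_pos : ∀ x, 0 < G x) (hG_bdd : ∃ c, ∀ x, G x ≤ c)
    (hH : ∀ x (A : Set X), MeasurableSet A →
      ENNReal.ofReal (G x) * M x A = ∫⁻ y in A, ENNReal.ofReal (q x y) ∂ν)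
    (lam : ℝ) (hlam_pos : 0 < lam)
    (ηs : Measure X) [IsProbabilityMeasure ηs]
    (hs : X → ℝ) (hhs_meas : Measurable hs)
    (hhs_lb : ∀ x, εm / εp ≤ hs x) (hhs_ub : ∀ x, hs x ≤ εp / εm)
    (h_meas_eq : ∀ A : Set X, MeasurableSet A →
      ∫⁻ x, ENNReal.ofReal (G x) * M x A ∂ηs = ENNReal.ofReal lam * ηs A)
    (h_fun_eq : ∀ x, Qop G M hs x = lam * hs x)
    (h_norm : ∫ x, hs x ∂ηs = 1)
    (μ : Measure X) [IsProbabilityMeasure μ] :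
    ∀ n : ℕ, ∀ φ : X → ℝ, Measurable φ → (∀ y, |φ y| ≤ 1) →
      |etaInt G M μ n φ - ∫ y, φ y ∂ηs| ≤ (1 - εm / εp) ^ n * (4 * (εp / εm) ^ 3) :=
  stmt9_general G M ν q εm εp hq_meas hεm_pos hεle hq_lb hq_ub hG_pos hH lam hlam_pos ηs h_meas_eq μ
end

section
/- Under assumption (H), given a principal eigen-triple (λ⋆, η⋆, h⋆), for every initial probability measure μ and all integers 0 ≤ p ≤ n one has sup_{x∈X} |h_{p,n}(x) − h⋆(x)| ≤ ρ^{(n−p)∧p} · C_h, where ρ := 1 − ε⁻/ε⁺ and C_h := 2(ε⁺/ε⁻)²·(1 + (ε⁺/ε⁻) + 2(ε⁺/ε⁻)³); the bound does not depend on μ. -/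
open MeasureTheory ProbabilityTheory Filter
open scoped ENNReal

/-!
Under (H), `h⋆` turns `Q` into the Doob transform `P(x, dy) = q(x, y) h⋆(y) ν(dy) / (λ⋆ h⋆(x))`,
a Markov kernel with the Doeblin minorization `P(x, ·) ≥ (ε⁻/ε⁺) · h⋆ν / ν(h⋆)`; hence `Pᵐ`
shrinks the range of a function by the factor `ρᵐ`. Since `Q⁽ᵐ⁾(1) = λ⋆ᵐ h⋆ Tₘ` with
`Tₘ := Pᵐ(1/h⋆)`, and `η⋆(h⋆ Tₘ) = η⋆(1) = 1 = η⋆(h⋆)` forces the range of `Tₘ` to contain `1`,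
every `Tₘ` is uniformly `ρᵐ`-close to `1`. Finally `h_{p,n} = h⋆ T_{n-p} μ(h⋆ T_p) / μ(h⋆ T_n)`,
and all three factors `T_{n-p}`, `μ(h⋆ T_p) / μ(h⋆)`, `μ(h⋆ T_n) / μ(h⋆)` are `ρ^{(n-p)∧p}`-close
to `1`.
-/

open Set

namespace MeasureTheory

variable {X : Type*} [MeasurableSpace X] {μ : Measure X} {w f : X → ℝ} {a b : ℝ}

lemma integrable_of_mem_Icc [IsFiniteMeasure μ] (hf : AEStronglyMeasurable f μ)
    (hab : ∀ x, f x ∈ Icc a b) : Integrable f μ :=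
  .of_bound hf (max |a| |b|) (ae_of_all _ fun x => abs_le_max_abs_abs (hab x).1 (hab x).2)

lemma Integrable.mul_of_mem_Icc (hw : Integrable w μ) (hf : AEStronglyMeasurable f μ)
    (hab : ∀ x, f x ∈ Icc a b) : Integrable (fun x => w x * f x) μ :=
  hw.mul_bdd hf (ae_of_all _ fun x => abs_le_max_abs_abs (hab x).1 (hab x).2)

lemma integral_mul_mem_Icc (hw0 : ∀ x, 0 ≤ w x) (hw : Integrable w μ)
    (hf : AEStronglyMeasurable f μ) (hab : ∀ x, f x ∈ Icc a b) :
    ∫ x, w x * f x ∂μ ∈ Icc (a * ∫ x, w x ∂μ) (b * ∫ x, w x ∂μ) := by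
  have hwf := hw.mul_of_mem_Icc hf hab
  rw [← integral_const_mul, ← integral_const_mul]
  exact ⟨integral_mono (hw.const_mul a) hwf fun x => by
      simpa only [mul_comm] using mul_le_mul_of_nonneg_left (hab x).1 (hw0 x),
    integral_mono hwf (hw.const_mul b) fun x => by
      simpa only [mul_comm] using mul_le_mul_of_nonneg_left (hab x).2 (hw0 x)⟩

end MeasureTheory

namespace FeynmanKac

variable {X : Type*} [MeasurableSpace X]

noncomputable def intOp (ν : Measure X) (κ : X → X → ℝ) (φ : X → ℝ) (x : X) : ℝ :=
  ∫ y, κ x y * φ y ∂ν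

section IntOp

variable {ν : Measure X} {κ : X → X → ℝ} {φ : X → ℝ}

lemma intOp_const_mul (a : ℝ) (φ : X → ℝ) (x : X) :
    intOp ν κ (fun y => a * φ y) x = a * intOp ν κ φ x := by
  simp only [intOp, ← integral_const_mul, mul_left_comm]

lemma measurable_intOp [SFinite ν] (hκ : Measurable (Function.uncurry κ)) (hφ : Measurable φ) :
    Measurable (intOp ν κ φ) :=
  (hκ.mul (hφ.comp measurable_snd)).stronglyMeasurable.integral_prod_right.measurable

lemma measurable_iterate_intOp [SFinite ν] (hκ : Measurable (Function.uncurry κ))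
    (hφ : Measurable φ) (m : ℕ) : Measurable ((intOp ν κ)^[m] φ) := by
  induction m with
  | zero => exact hφ
  | succ m ih => rw [Function.iterate_succ_apply']; exact measurable_intOp hκ ih

variable {π : X → ℝ} {c a b : ℝ}

/-- Doeblin: `κ x = c π + (κ x - c π)` where only the remainder, of mass `1 - c`, depends
on `x`. -/
theorem exists_Icc_intOp_of_minorization (hκ : ∀ x, Integrable (κ x) ν)
    (hκ1 : ∀ x, ∫ y, κ x y ∂ν = 1) (hπ0 : ∀ y, 0 ≤ π y) (hπ : Integrable π ν)
    (hπ1 : ∫ y, π y ∂ν = 1) (hc : 0 ≤ c) (hmin : ∀ x y, c * π y ≤ κ x y)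
    (hφ : AEStronglyMeasurable φ ν) (hab : ∀ y, φ y ∈ Icc a b) :
    ∃ a' b', a ≤ a' ∧ b' ≤ b ∧ b' - a' = (1 - c) * (b - a) ∧
      ∀ x, intOp ν κ φ x ∈ Icc a' b' := by
  set t := ∫ y, π y * φ y ∂ν
  have ht : t ∈ Icc a b := by simpa [hπ1] using integral_mul_mem_Icc hπ0 hπ hφ hab
  refine ⟨(1 - c) * a + c * t, (1 - c) * b + c * t, by nlinarith [ht.1], by nlinarith [ht.2],
    by ring, fun x => ?_⟩
  have hres : Integrable (fun y => κ x y - c * π y) ν := (hκ x).sub (hπ.const_mul c)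
  have hmass : ∫ y, (κ x y - c * π y) ∂ν = 1 - c := by
    rw [integral_sub (hκ x) (hπ.const_mul c), integral_const_mul, hκ1, hπ1, mul_one]
  have hsplit : intOp ν κ φ x = ∫ y, (κ x y - c * π y) * φ y ∂ν + c * t := by
    rw [intOp, ← integral_const_mul, ← integral_add (hres.mul_of_mem_Icc hφ hab)
      ((hπ.mul_of_mem_Icc hφ hab).const_mul c)]
    congr 1 with y
    ring
  obtain ⟨h1, h2⟩ := integral_mul_mem_Icc (fun y => sub_nonneg.2 (hmin x y)) hres hφ hab
  rw [hmass] at h1 h2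
  rw [hsplit]
  constructor <;> linarith

theorem exists_Icc_iterate_intOp_of_minorization [SFinite ν]
    (hκm : Measurable (Function.uncurry κ)) (hκ : ∀ x, Integrable (κ x) ν)
    (hκ1 : ∀ x, ∫ y, κ x y ∂ν = 1) (hπ0 : ∀ y, 0 ≤ π y) (hπ : Integrable π ν)
    (hπ1 : ∫ y, π y ∂ν = 1) (hc : 0 ≤ c) (hmin : ∀ x y, c * π y ≤ κ x y)
    (hφ : Measurable φ) (hab : ∀ y, φ y ∈ Icc a b) (m : ℕ) :
    ∃ a' b', a ≤ a' ∧ b' ≤ b ∧ b' - a' = (1 - c) ^ m * (b - a) ∧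
      ∀ x, (intOp ν κ)^[m] φ x ∈ Icc a' b' := by
  induction m with
  | zero => exact ⟨a, b, le_rfl, le_rfl, by ring, hab⟩
  | succ m ih =>
    obtain ⟨a', b', ha, hb, hlen, hmem⟩ := ih
    obtain ⟨a'', b'', ha', hb', hlen', hmem'⟩ := exists_Icc_intOp_of_minorization hκ hκ1 hπ0 hπ
      hπ1 hc hmin (measurable_iterate_intOp hκm hφ m).aestronglyMeasurable hmem
    refine ⟨a'', b'', ha.trans ha', hb'.trans hb, by rw [hlen', hlen]; ring, fun x => ?_⟩
    rw [Function.iterate_succ_apply']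
    exact hmem' x

end IntOp

noncomputable def doobKernel (κ : X → X → ℝ) (h : X → ℝ) (lam : ℝ) (x y : X) : ℝ :=
  κ x y * h y / (lam * h x)

section Doob

variable {ν : Measure X} {κ : X → X → ℝ} {h : X → ℝ} {lam : ℝ}

lemma measurable_doobKernel (hκ : Measurable (Function.uncurry κ)) (hh : Measurable h) :
    Measurable (Function.uncurry (doobKernel κ h lam)) :=
  (hκ.mul (hh.comp measurable_snd)).div (measurable_const.mul (hh.comp measurable_fst))

lemma integrable_doobKernel {εm εp : ℝ} (hκm : Measurable (Function.uncurry κ))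
    (hκ : ∀ x y, κ x y ∈ Icc εm εp) (hh : Integrable h ν) (x : X) :
    Integrable (doobKernel κ h lam x) ν :=
  (hh.bdd_mul (hκm.comp measurable_prodMk_left).aestronglyMeasurable
    (ae_of_all _ fun y => abs_le_max_abs_abs (hκ x y).1 (hκ x y).2)).div_const _

lemma integral_doobKernel (hne : ∀ x, lam * h x ≠ 0) (heig : ∀ x, intOp ν κ h x = lam * h x)
    (x : X) : ∫ y, doobKernel κ h lam x y ∂ν = 1 := by
  simp only [doobKernel, integral_div]
  exact (div_eq_one_iff_eq (hne x)).2 (heig x)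

lemma eigen_le_mul_integral {εm εp : ℝ} (hεm : 0 ≤ εm) (hκ : ∀ x y, κ x y ∈ Icc εm εp)
    (hh0 : ∀ y, 0 ≤ h y) (hh : Integrable h ν) (heig : ∀ x, intOp ν κ h x = lam * h x)
    (x : X) : lam * h x ≤ εp * ∫ z, h z ∂ν := by
  rw [← heig, intOp, ← integral_const_mul]
  exact integral_mono_of_nonneg (ae_of_all _ fun z => mul_nonneg (hεm.trans (hκ x z).1) (hh0 z))
    (hh.const_mul εp) (ae_of_all _ fun z => mul_le_mul_of_nonneg_right (hκ x z).2 (hh0 z))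

lemma mul_le_doobKernel {εm εp : ℝ} (hεm : 0 ≤ εm) (hκ : ∀ x y, κ x y ∈ Icc εm εp)
    (hh0 : ∀ y, 0 ≤ h y) (hh : Integrable h ν) (hpos : ∀ x, 0 < lam * h x)
    (heig : ∀ x, intOp ν κ h x = lam * h x) (x y : X) :
    εm / εp * (h y / ∫ z, h z ∂ν) ≤ doobKernel κ h lam x y := by
  rw [div_mul_div_comm, doobKernel]
  exact div_le_div₀ (mul_nonneg (hεm.trans (hκ x y).1) (hh0 y))
    (mul_le_mul_of_nonneg_right (hκ x y).1 (hh0 y)) (hpos x)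
    (eigen_le_mul_integral hεm hκ hh0 hh heig x)

lemma intOp_mul_eq_doobKernel (hne : ∀ x, lam * h x ≠ 0) (ψ : X → ℝ) (x : X) :
    intOp ν κ (fun y => h y * ψ y) x = lam * h x * intOp ν (doobKernel κ h lam) ψ x := by
  have : intOp ν (doobKernel κ h lam) ψ x = intOp ν κ (fun y => h y * ψ y) x / (lam * h x) := by
    simp only [intOp, doobKernel, ← integral_div]
    congr 1 with y
    ring
  rw [this, mul_div_cancel₀ _ (hne x)]

lemma iterate_intOp_mul_eq_doobKernel (hne : ∀ x, lam * h x ≠ 0) (ψ : X → ℝ) (m : ℕ) (x : X) :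
    (intOp ν κ)^[m] (fun y => h y * ψ y) x
      = lam ^ m * (h x * (intOp ν (doobKernel κ h lam))^[m] ψ x) := by
  induction m generalizing x with
  | zero => simp
  | succ m ih =>
    simp only [Function.iterate_succ_apply']
    rw [funext ih, intOp_const_mul, intOp_mul_eq_doobKernel hne]
    ring

lemma integral_mul_iterate_doobKernel {ηs : Measure X} {ψ : X → ℝ} (hlam : lam ≠ 0)
    (hne : ∀ x, lam * h x ≠ 0)
    (hηs : ∀ m, ∫ x, intOp ν κ (fun y => h y * (intOp ν (doobKernel κ h lam))^[m] ψ y) x ∂ηs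
      = lam * ∫ x, h x * (intOp ν (doobKernel κ h lam))^[m] ψ x ∂ηs) (m : ℕ) :
    ∫ x, h x * (intOp ν (doobKernel κ h lam))^[m] ψ x ∂ηs = ∫ x, h x * ψ x ∂ηs := by
  induction m with
  | zero => rfl
  | succ m ih =>
    have hpt : ∀ x, h x * (intOp ν (doobKernel κ h lam))^[m + 1] ψ x
        = intOp ν κ (fun y => h y * (intOp ν (doobKernel κ h lam))^[m] ψ y) x / lam := by
      intro x
      rw [Function.iterate_succ_apply', intOp_mul_eq_doobKernel hne, eq_div_iff hlam]
      ring
    simp only [hpt, integral_div, hηs, mul_div_cancel_left₀ _ hlam, ih]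

end Doob

section FeynmanKacOperator

variable {G : X → ℝ} {M : Kernel X X} {ν : Measure X} {q : X → X → ℝ}

lemma Qiter_eq_iterate (n : ℕ) : Qiter G M n = (Qop G M)^[n] := by
  induction n with
  | zero => rfl
  | succ n ih => rw [Function.iterate_succ', ← ih]; rfl

lemma Qiter_add (m n : ℕ) (φ : X → ℝ) :
    Qiter G M (m + n) φ = Qiter G M m (Qiter G M n φ) := by
  simp only [Qiter_eq_iterate, Function.iterate_add_apply]

lemma smul_kernel_eq_withDensity
    (hH : ∀ x (A : Set X), MeasurableSet A →
      ENNReal.ofReal (G x) * M x A = ∫⁻ y in A, ENNReal.ofReal (q x y) ∂ν) (x : X) :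
    ENNReal.ofReal (G x) • M x = ν.withDensity fun y => ENNReal.ofReal (q x y) := by
  ext A hA
  rw [Measure.smul_apply, smul_eq_mul, hH x A hA, withDensity_apply _ hA]

lemma Qop_eq_integral_smul_kernel (hG0 : ∀ x, 0 ≤ G x) (φ : X → ℝ) (x : X) :
    Qop G M φ x = ∫ y, φ y ∂(ENNReal.ofReal (G x) • M x) := by
  rw [integral_smul_measure, ENNReal.toReal_ofReal (hG0 x), smul_eq_mul, Qop]

lemma Qop_eq_intOp (hG0 : ∀ x, 0 ≤ G x) (hq : ∀ x, Measurable (q x)) (hq0 : ∀ x y, 0 ≤ q x y)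
    (hH : ∀ x (A : Set X), MeasurableSet A →
      ENNReal.ofReal (G x) * M x A = ∫⁻ y in A, ENNReal.ofReal (q x y) ∂ν) :
    Qop G M = intOp ν q := by
  ext φ x
  rw [Qop_eq_integral_smul_kernel hG0, smul_kernel_eq_withDensity hH,
    integral_withDensity_eq_integral_toReal_smul (hq x).ennreal_ofReal
      (ae_of_all _ fun _ => ENNReal.ofReal_lt_top)]
  simp only [ENNReal.toReal_ofReal (hq0 x _), smul_eq_mul, intOp]

lemma integral_Qop_of_eigenmeasure [SFinite ν] {ηs : Measure X} [IsFiniteMeasure ηs] {lam : ℝ}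
    (hG0 : ∀ x, 0 ≤ G x) (hq : Measurable (Function.uncurry q)) (hlam : 0 ≤ lam)
    (hH : ∀ x (A : Set X), MeasurableSet A →
      ENNReal.ofReal (G x) * M x A = ∫⁻ y in A, ENNReal.ofReal (q x y) ∂ν)
    (h_meas_eq : ∀ A : Set X, MeasurableSet A →
      ∫⁻ x, ENNReal.ofReal (G x) * M x A ∂ηs = ENNReal.ofReal lam * ηs A)
    {φ : X → ℝ} {a b : ℝ} (hφ : Measurable φ) (hab : ∀ x, φ x ∈ Icc a b) :
    ∫ x, Qop G M φ x ∂ηs = lam * ∫ x, φ x ∂ηs := by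
  -- `Q` as a measurable kernel, so that it can be composed with `ηs`
  set K : Kernel X X := (Kernel.const X ν).withDensity fun x y => ENNReal.ofReal (q x y)
  have hK : ∀ x, K x = ENNReal.ofReal (G x) • M x := fun x => by
    rw [Kernel.withDensity_apply _ hq.ennreal_ofReal, Kernel.const_apply,
      smul_kernel_eq_withDensity hH]
  have hcomp : K ∘ₘ ηs = ENNReal.ofReal lam • ηs := by
    ext A hA
    rw [Measure.bind_apply hA K.aemeasurable, Measure.smul_apply, smul_eq_mul, ← h_meas_eq A hA]
    simp only [hK, Measure.smul_apply, smul_eq_mul]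
  have hint : Integrable φ (K ∘ₘ ηs) := by
    rw [hcomp]
    exact (integrable_of_mem_Icc hφ.aestronglyMeasurable hab).smul_measure ENNReal.ofReal_ne_top
  calc ∫ x, Qop G M φ x ∂ηs = ∫ x, ∫ y, φ y ∂K x ∂ηs := by
        simp only [Qop_eq_integral_smul_kernel hG0, hK]
    _ = ∫ y, φ y ∂(K ∘ₘ ηs) := by
        rw [Measure.comp_eq_comp_const_apply] at hint ⊢
        exact (Kernel.integral_comp hint).symm
    _ = lam * ∫ x, φ x ∂ηs := by
        rw [hcomp, integral_smul_measure, ENNReal.toReal_ofReal hlam, smul_eq_mul]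

lemma Qiter_one_eq_iterate_doobKernel {h : X → ℝ} {lam : ℝ} (hQ : Qop G M = intOp ν q)
    (hlam : lam ≠ 0) (hh : ∀ x, h x ≠ 0) (m : ℕ) :
    Qiter G M m (fun _ => 1)
      = fun x => lam ^ m * (h x * (intOp ν (doobKernel q h lam))^[m] (fun y => (h y)⁻¹) x) := by
  ext x
  rw [Qiter_eq_iterate, hQ, ← iterate_intOp_mul_eq_doobKernel fun y => mul_ne_zero hlam (hh y)]
  simp only [mul_inv_cancel₀ (hh _)]

lemma hpn_eq_of_Qiter_eq {μ : Measure X} {f : ℕ → X → ℝ} {lam : ℝ} (hlam : lam ≠ 0)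
    (hf : ∀ m, Qiter G M m (fun _ => 1) = fun x => lam ^ m * f m x) {p n : ℕ} (hle : p ≤ n)
    (x : X) : hpn G M μ p n x = f (n - p) x * (∫ y, f p y ∂μ) / ∫ y, f n y ∂μ := by
  obtain ⟨k, rfl⟩ := Nat.exists_eq_add_of_le hle
  rw [hpn, etaInt, Nat.add_sub_cancel_left, ← Qiter_add, hf, hf, hf]
  simp only [integral_const_mul, pow_add]
  rw [div_div_eq_mul_div, mul_mul_mul_comm, mul_comm (lam ^ k) (lam ^ p),
    mul_div_mul_left _ _ (by positivity)]

end FeynmanKacOperator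

lemma inv_mem_Icc_inv {a t : ℝ} (ha : 0 < a) (ht : t ∈ Icc a a⁻¹) : t⁻¹ ∈ Icc a a⁻¹ :=
  ⟨(le_inv_comm₀ ha (ha.trans_le ht.1)).2 ht.2, inv_anti₀ ha ht.1⟩

theorem iterate_doobKernel_inv_mem_Icc {ν ηs : Measure X} [IsFiniteMeasure ν]
    [IsProbabilityMeasure ηs] {q : X → X → ℝ} {h : X → ℝ} {εm εp lam : ℝ}
    (hq : Measurable (Function.uncurry q)) (hqb : ∀ x y, q x y ∈ Icc εm εp) (hεm : 0 < εm)
    (hh : Measurable h) (hhb : ∀ x, h x ∈ Icc (εm / εp) (εp / εm)) (hlam : 0 < lam)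
    (heig : ∀ x, intOp ν q h x = lam * h x)
    (hηs : ∀ (φ : X → ℝ) (a b : ℝ), Measurable φ → (∀ x, φ x ∈ Icc a b) →
      ∫ x, intOp ν q φ x ∂ηs = lam * ∫ x, φ x ∂ηs)
    (hnorm : ∫ x, h x ∂ηs = 1) (m : ℕ) (x : X) :
    (intOp ν (doobKernel q h lam))^[m] (fun y => (h y)⁻¹) x ∈ Icc (εm / εp) (εp / εm) ∩
      Icc (1 - (1 - εm / εp) ^ m * (εp / εm - εm / εp))
        (1 + (1 - εm / εp) ^ m * (εp / εm - εm / εp)) := by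
  set T : ℕ → X → ℝ := fun m => (intOp ν (doobKernel q h lam))^[m] fun y => (h y)⁻¹
  have hεp : 0 < εp := hεm.trans_le ((hqb x x).1.trans (hqb x x).2)
  have hc : 0 < εm / εp := div_pos hεm hεp
  have hh0 : ∀ x, 0 < h x := fun x => hc.trans_le (hhb x).1
  have hpos : ∀ x, 0 < lam * h x := fun x => mul_pos hlam (hh0 x)
  have hhint : Integrable h ν := integrable_of_mem_Icc hh.aestronglyMeasurable hhb
  have hmass : 0 < ∫ z, h z ∂ν := pos_of_mul_pos_right ((hpos x).trans_le
    (eigen_le_mul_integral hεm.le hqb (fun y => (hh0 y).le) hhint heig x)) hεp.le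
  have hTm : ∀ m, Measurable (T m) :=
    measurable_iterate_intOp (measurable_doobKernel hq hh) (hh.inv (f := h))
  have hinv : ∀ y, (h y)⁻¹ ∈ Icc (εm / εp) (εp / εm) := fun y => by
    simpa only [inv_div] using inv_mem_Icc_inv hc (by simpa only [inv_div] using hhb y)
  have hosc := exists_Icc_iterate_intOp_of_minorization (π := fun y => h y / ∫ z, h z ∂ν)
    (φ := fun y => (h y)⁻¹) (measurable_doobKernel hq hh) (integrable_doobKernel hq hqb hhint)
    (integral_doobKernel (fun x => (hpos x).ne') heig) (fun y => div_nonneg (hh0 y).le hmass.le)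
    (hhint.div_const _) (by rw [integral_div, div_self hmass.ne']) hc.le
    (mul_le_doobKernel hεm.le hqb (fun y => (hh0 y).le) hhint hpos heig) (hh.inv (f := h)) hinv
  have hTb : ∀ m y, T m y ∈ Icc (εm / εp) (εp / εm) := fun m y => by
    obtain ⟨a', b', ha, hb, -, hmem⟩ := hosc m
    exact ⟨ha.trans (hmem y).1, (hmem y).2.trans hb⟩
  have hT : ∫ x, h x * T m x ∂ηs = 1 := by
    rw [integral_mul_iterate_doobKernel hlam.ne' (fun x => (hpos x).ne') (fun m => hηs _
      (εm / εp * (εm / εp)) (εp / εm * (εp / εm)) (hh.mul (hTm m)) fun y =>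
        ⟨mul_le_mul (hhb y).1 (hTb m y).1 hc.le (hh0 y).le,
          mul_le_mul (hhb y).2 (hTb m y).2 (hc.le.trans (hTb m y).1) ((hh0 y).le.trans (hhb y).2)⟩)]
    simp [mul_inv_cancel₀ (hh0 _).ne']
  obtain ⟨a', b', -, -, hlen, hmem⟩ := hosc m
  have h1 : 1 ∈ Icc a' b' := by
    simpa [hT, hnorm] using integral_mul_mem_Icc (μ := ηs) (fun y => (hh0 y).le)
      (integrable_of_mem_Icc hh.aestronglyMeasurable hhb) (hTm m).aestronglyMeasurable hmem
  exact ⟨hTb m x, by linarith [(hmem x).1, h1.2], by linarith [(hmem x).2, h1.1]⟩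

lemma abs_mul_div_sub_le {y g A B m c r D : ℝ} (hc : 0 < c) (hm : 0 < m) (hy : y ∈ Icc 0 r)
    (hg : g ∈ Icc 0 r) (hg1 : |g - 1| ≤ D) (hB : |B - m| ≤ m * D) (hA : |A - m| ≤ m * D)
    (hAc : c * m ≤ A) : |y * g * B / A - y| ≤ r * (r + 2) * D / c := by
  have hA0 : 0 < A := (mul_pos hc hm).trans_le hAc
  have hr : 0 ≤ r := hg.1.trans hg.2
  have key : |g * B - A| ≤ (r + 2) * (m * D) := by
    have h1 : |g * (B - m)| ≤ r * (m * D) := by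
      rw [abs_mul, abs_of_nonneg hg.1]
      exact mul_le_mul hg.2 hB (abs_nonneg _) hr
    have h2 : |(g - 1) * m| ≤ D * m := by
      rw [abs_mul, abs_of_pos hm]
      exact mul_le_mul_of_nonneg_right hg1 hm.le
    rw [show g * B - A = g * (B - m) + (g - 1) * m + (m - A) by ring]
    linarith [abs_add_three (g * (B - m)) ((g - 1) * m) (m - A), abs_sub_comm m A]
  rw [show y * g * B / A - y = y * (g * B - A) / A by field_simp, abs_div, abs_mul,
    abs_of_nonneg hy.1, abs_of_pos hA0, div_le_div_iff₀ hA0 hc]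
  have hD : 0 ≤ D := (abs_nonneg _).trans hg1
  calc y * |g * B - A| * c ≤ r * ((r + 2) * (m * D)) * c := by gcongr; exact hy.2
    _ = r * (r + 2) * D * (c * m) := by ring
    _ ≤ r * (r + 2) * D * A := by gcongr

lemma abs_mul_integral_div_sub_le {μ : Measure X} [IsFiniteMeasure μ] [NeZero μ] {h : X → ℝ}
    {T : ℕ → X → ℝ} {c r ρ : ℝ} (hc : 0 < c) (hρ0 : 0 ≤ ρ) (hρ1 : ρ ≤ 1) (hh : Measurable h)
    (hhb : ∀ x, h x ∈ Icc c r) (hT : ∀ m, Measurable (T m))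
    (hTb : ∀ m x, T m x ∈ Icc c r ∩ Icc (1 - ρ ^ m * (r - c)) (1 + ρ ^ m * (r - c)))
    (p k : ℕ) (x : X) :
    |h x * T k x * (∫ y, h y * T p y ∂μ) / (∫ y, h y * T (p + k) y ∂μ) - h x|
      ≤ ρ ^ min k p * (r * (r + 2) * (r - c) / c) := by
  have hD : ∀ m, min k p ≤ m → ρ ^ m * (r - c) ≤ ρ ^ min k p * (r - c) := fun m hm =>
    mul_le_mul_of_nonneg_right (pow_le_pow_of_le_one hρ0 hρ1 hm)
      (sub_nonneg.2 ((hhb x).1.trans (hhb x).2))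
  have hh0 : ∀ y, 0 ≤ h y := fun y => hc.le.trans (hhb y).1
  have hint : Integrable h μ := integrable_of_mem_Icc hh.aestronglyMeasurable hhb
  have hmass : 0 < ∫ y, h y ∂μ := by
    have := integral_mono (integrable_const c) hint fun y => (hhb y).1
    rw [integral_const, smul_eq_mul] at this
    exact (mul_pos measureReal_univ_pos hc).trans_le this
  have hnear : ∀ m, |∫ y, h y * T m y ∂μ - ∫ y, h y ∂μ| ≤ (∫ y, h y ∂μ) * (ρ ^ m * (r - c)) := by
    intro m
    obtain ⟨h1, h2⟩ := integral_mul_mem_Icc hh0 hint (hT m).aestronglyMeasurable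
      fun y => (hTb m y).2
    rw [abs_le]
    constructor <;> nlinarith
  refine (abs_mul_div_sub_le (D := ρ ^ min k p * (r - c)) hc hmass ⟨hh0 x, (hhb x).2⟩
    ⟨hc.le.trans (hTb k x).1.1, (hTb k x).1.2⟩ ?_
    ((hnear p).trans (mul_le_mul_of_nonneg_left (hD p (min_le_right k p)) hmass.le))
    ((hnear (p + k)).trans (mul_le_mul_of_nonneg_left
      (hD _ ((min_le_right k p).trans (Nat.le_add_right p k))) hmass.le))
    (integral_mul_mem_Icc hh0 hint (hT (p + k)).aestronglyMeasurable
      fun y => (hTb (p + k) y).1).1).trans_eq (by ring)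
  rw [abs_le]
  constructor <;> linarith [(hTb k x).2.1, (hTb k x).2.2, hD k (min_le_left k p)]

lemma stability_constant_le {εm εp : ℝ} (hεm : 0 < εm) (hεle : εm ≤ εp) :
    εp / εm * (εp / εm + 2) * (εp / εm - εm / εp) / (εm / εp)
      ≤ 2 * (εp / εm) ^ 2 * (1 + εp / εm + 2 * (εp / εm) ^ 3) := by
  have hr : 1 ≤ εp / εm := (one_le_div hεm).2 hεle
  rw [← inv_div εp εm, div_inv_eq_mul]
  generalize εp / εm = r at hr ⊢
  have : r * (r + 2) * (r - r⁻¹) * r ≤ r * (r + 2) * r * r := by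
    gcongr
    linarith [inv_pos.2 (zero_lt_one.trans_le hr)]
  nlinarith [pow_le_pow_left₀ zero_le_one hr 4]

end FeynmanKac

open FeynmanKac

theorem stmt10_general {X : Type*} [MeasurableSpace X]
    (G : X → ℝ) (M : Kernel X X)
    (ν : Measure X) [IsProbabilityMeasure ν]
    (q : X → X → ℝ) (εm εp : ℝ)
    (hq_meas : Measurable fun p : X × X => q p.1 p.2)
    (hεm_pos : 0 < εm) (hεle : εm ≤ εp)
    (hq_lb : ∀ x y, εm ≤ q x y) (hq_ub : ∀ x y, q x y ≤ εp)
    (hG_pos : ∀ x, 0 < G x)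
    (hH : ∀ x (A : Set X), MeasurableSet A →
      ENNReal.ofReal (G x) * M x A = ∫⁻ y in A, ENNReal.ofReal (q x y) ∂ν)
    (lam : ℝ) (hlam_pos : 0 < lam)
    (ηs : Measure X) [IsProbabilityMeasure ηs]
    (hs : X → ℝ) (hhs_meas : Measurable hs)
    (hhs_lb : ∀ x, εm / εp ≤ hs x) (hhs_ub : ∀ x, hs x ≤ εp / εm)
    (h_meas_eq : ∀ A : Set X, MeasurableSet A →
      ∫⁻ x, ENNReal.ofReal (G x) * M x A ∂ηs = ENNReal.ofReal lam * ηs A)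
    (h_fun_eq : ∀ x, Qop G M hs x = lam * hs x)
    (h_norm : ∫ x, hs x ∂ηs = 1)
    (μ : Measure X) [IsProbabilityMeasure μ] :
    ∀ p n : ℕ, p ≤ n → ∀ x : X,
      |hpn G M μ p n x - hs x|
        ≤ (1 - εm / εp) ^ (min (n - p) p) *
          (2 * (εp / εm) ^ 2 * (1 + εp / εm + 2 * (εp / εm) ^ 3)) := by
  intro p n hle x
  have hG0 : ∀ x, 0 ≤ G x := fun x => (hG_pos x).le
  have hc : 0 < εm / εp := div_pos hεm_pos (hεm_pos.trans_le hεle)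
  have hρ0 : 0 ≤ 1 - εm / εp := sub_nonneg.2 ((div_le_one (hεm_pos.trans_le hεle)).2 hεle)
  have hQ : Qop G M = intOp ν q := Qop_eq_intOp hG0 (fun x => hq_meas.comp measurable_prodMk_left)
    (fun x y => hεm_pos.le.trans (hq_lb x y)) hH
  have hT := iterate_doobKernel_inv_mem_Icc hq_meas (fun x y => ⟨hq_lb x y, hq_ub x y⟩) hεm_pos
    hhs_meas (fun x => ⟨hhs_lb x, hhs_ub x⟩) hlam_pos (by simpa only [hQ] using h_fun_eq)
    (fun φ a b hφ hab => hQ ▸ integral_Qop_of_eigenmeasure hG0 hq_meas hlam_pos.le hH h_meas_eq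
      hφ hab) h_norm
  obtain ⟨k, rfl⟩ := Nat.exists_eq_add_of_le hle
  rw [hpn_eq_of_Qiter_eq hlam_pos.ne' (Qiter_one_eq_iterate_doobKernel hQ hlam_pos.ne'
    fun y => (hc.trans_le (hhs_lb y)).ne') hle, Nat.add_sub_cancel_left]
  calc _ ≤ (1 - εm / εp) ^ min k p *
        (εp / εm * (εp / εm + 2) * (εp / εm - εm / εp) / (εm / εp)) :=
        abs_mul_integral_div_sub_le
          (T := fun m => (intOp ν (doobKernel q hs lam))^[m] fun y => (hs y)⁻¹)
          hc hρ0 (sub_le_self _ hc.le) hhs_meas (fun x => ⟨hhs_lb x, hhs_ub x⟩)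
          (measurable_iterate_intOp (measurable_doobKernel hq_meas hhs_meas) hhs_meas.inv) hT p k x
    _ ≤ _ := mul_le_mul_of_nonneg_left (stability_constant_le hεm_pos hεle) (pow_nonneg hρ0 _)

theorem stmt10 {X : Type*} [MeasurableSpace X]
    (G : X → ℝ) (M : Kernel X X) [IsMarkovKernel M]
    (ν : Measure X) [IsProbabilityMeasure ν]
    (q : X → X → ℝ) (εm εp : ℝ)
    (hq_meas : Measurable fun p : X × X => q p.1 p.2)
    (hεm_pos : 0 < εm) (hεle : εm ≤ εp)
    (hq_lb : ∀ x y, εm ≤ q x y) (hq_ub : ∀ x y, q x y ≤ εp)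
    (hG_meas : Measurable G) (hG_pos : ∀ x, 0 < G x) (hG_bdd : ∃ c, ∀ x, G x ≤ c)
    (hH : ∀ x (A : Set X), MeasurableSet A →
      ENNReal.ofReal (G x) * M x A = ∫⁻ y in A, ENNReal.ofReal (q x y) ∂ν)
    (lam : ℝ) (hlam_pos : 0 < lam)
    (ηs : Measure X) [IsProbabilityMeasure ηs]
    (hs : X → ℝ) (hhs_meas : Measurable hs)
    (hhs_lb : ∀ x, εm / εp ≤ hs x) (hhs_ub : ∀ x, hs x ≤ εp / εm)
    (h_meas_eq : ∀ A : Set X, MeasurableSet A →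
      ∫⁻ x, ENNReal.ofReal (G x) * M x A ∂ηs = ENNReal.ofReal lam * ηs A)
    (h_fun_eq : ∀ x, Qop G M hs x = lam * hs x)
    (h_norm : ∫ x, hs x ∂ηs = 1)
    (μ : Measure X) [IsProbabilityMeasure μ] :
    ∀ p n : ℕ, p ≤ n → ∀ x : X,
      |hpn G M μ p n x - hs x|
        ≤ (1 - εm / εp) ^ (min (n - p) p) *
          (2 * (εp / εm) ^ 2 * (1 + εp / εm + 2 * (εp / εm) ^ 3)) :=
  stmt10_general G M ν q εm εp hq_meas hεm_pos hεle hq_lb hq_ub hG_pos hH lam hlam_pos ηs hs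
    hhs_meas hhs_lb hhs_ub h_meas_eq h_fun_eq h_norm μ
end

section
/- Under assumption (H), given a principal eigen-triple (λ⋆, η⋆, h⋆), for every initial probability measure μ and all integers 0 ≤ p ≤ n one has |(∏_{ℓ=p}^{n−1} λ_ℓ)/λ⋆^{n−p} − 1| ≤ 2 ρ^{(n−p)∧p} (ε⁺/ε⁻)² (1 + 2(ε⁺/ε⁻)²), where ρ := 1 − ε⁻/ε⁺. -/
open MeasureTheory ProbabilityTheory Filter
open scoped ENNReal

/-- Regular functions: measurable and uniformly bounded. -/
def Reg {X : Type*} [MeasurableSpace X] (φ : X → ℝ) : Prop :=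
  Measurable φ ∧ ∃ C : ℝ, ∀ x, |φ x| ≤ C

/-- The integral operator with kernel density `q` w.r.t. `ν`. -/
noncomputable def TK {X : Type*} [MeasurableSpace X] (ν : Measure X) (q : X → X → ℝ)
    (φ : X → ℝ) (x : X) : ℝ := ∫ y, q x y * φ y ∂ν

/-- Iterates of `TK`. -/
noncomputable def TKit {X : Type*} [MeasurableSpace X] (ν : Measure X) (q : X → X → ℝ) :
    ℕ → (X → ℝ) → X → ℝ
  | 0 => fun φ => φ
  | n + 1 => fun φ => TK ν q (TKit ν q n φ)

section FK

variable {X : Type*} [MeasurableSpace X] {ν : Measure X} {q : X → X → ℝ} {εm εp : ℝ}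

lemma Reg.integrable {φ : X → ℝ} (h : Reg φ) (μ : Measure X) [IsFiniteMeasure μ] :
    Integrable φ μ := by
  obtain ⟨hm, C, hC⟩ := h
  exact ⟨hm.aestronglyMeasurable,
    HasFiniteIntegral.of_bounded (C := C) (ae_of_all _ (by simpa [Real.norm_eq_abs] using hC))⟩

lemma meas_q_left (hq : Measurable fun p : X × X => q p.1 p.2) (x : X) :
    Measurable (q x) := hq.comp measurable_prodMk_left

lemma reg_qmul (hq : Measurable fun p : X × X => q p.1 p.2)
    (hq0 : ∀ x y, 0 ≤ q x y) (hqb : ∀ x y, q x y ≤ εp)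
    {φ : X → ℝ} (h : Reg φ) (x : X) : Reg (fun y => q x y * φ y) := by
  obtain ⟨hm, C, hC⟩ := h
  refine ⟨(meas_q_left hq x).mul hm, ⟨εp * C, fun y => ?_⟩⟩
  rw [abs_mul, abs_of_nonneg (hq0 x y)]
  exact mul_le_mul (hqb x y) (hC y) (abs_nonneg _) (le_trans (hq0 x y) (hqb x y))

lemma Treg [IsProbabilityMeasure ν]
    (hq : Measurable fun p : X × X => q p.1 p.2)
    (hq0 : ∀ x y, 0 ≤ q x y) (hqb : ∀ x y, q x y ≤ εp)
    {φ : X → ℝ} (h : Reg φ) : Reg (TK ν q φ) := by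
  obtain ⟨hm, C, hC⟩ := h
  constructor
  · have hsm : StronglyMeasurable fun p : X × X => q p.1 p.2 * φ p.2 :=
      (hq.mul (hm.comp measurable_snd)).stronglyMeasurable
    exact hsm.integral_prod_right'.measurable
  · refine ⟨εp * C, fun x => ?_⟩
    have hb : ∀ y, ‖q x y * φ y‖ ≤ εp * C := by
      intro y
      rw [Real.norm_eq_abs, abs_mul, abs_of_nonneg (hq0 x y)]
      exact mul_le_mul (hqb x y) (hC y) (abs_nonneg _) (le_trans (hq0 x y) (hqb x y))
    have := norm_integral_le_of_norm_le_const (μ := ν)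
      (f := fun y => q x y * φ y) (C := εp * C) (ae_of_all _ hb)
    simpa [TK, Real.norm_eq_abs, measure_univ] using this

lemma Tmono [IsProbabilityMeasure ν]
    (hq : Measurable fun p : X × X => q p.1 p.2)
    (hq0 : ∀ x y, 0 ≤ q x y) (hqb : ∀ x y, q x y ≤ εp)
    {φ ψ : X → ℝ} (hφ : Reg φ) (hψ : Reg ψ) (hle : ∀ y, φ y ≤ ψ y) (x : X) :
    TK ν q φ x ≤ TK ν q ψ x := by
  refine integral_mono ((reg_qmul hq hq0 hqb hφ x).integrable ν)
    ((reg_qmul hq hq0 hqb hψ x).integrable ν) (fun y => ?_)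
  exact mul_le_mul_of_nonneg_left (hle y) (hq0 x y)

lemma Tconst_mul [IsProbabilityMeasure ν] (c : ℝ) (φ : X → ℝ) (x : X) :
    TK ν q (fun y => c * φ y) x = c * TK ν q φ x := by
  simp only [TK]
  rw [← integral_const_mul]
  congr 1; funext y; ring

end FK
section Key

variable {X : Type*} [MeasurableSpace X] {ν : Measure X} {q : X → X → ℝ} {εm εp : ℝ}

lemma TK_lb_pos [IsProbabilityMeasure ν]
    (hq : Measurable fun p : X × X => q p.1 p.2)
    (hεm_pos : 0 < εm) (hqlb : ∀ x y, εm ≤ q x y) (hqb : ∀ x y, q x y ≤ εp)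
    {φ : X → ℝ} (hφ : Reg φ) {c : ℝ} (hc : 0 < c) (hφlb : ∀ y, c ≤ φ y) (x : X) :
    εm * c ≤ TK ν q φ x := by
  have hq0 : ∀ x y, 0 ≤ q x y := fun x y => le_trans hεm_pos.le (hqlb x y)
  have h1 : ∫ (_ : X), εm * c ∂ν = εm * c := by simp [measure_univ]
  rw [← h1]
  refine integral_mono (integrable_const _) ((reg_qmul hq hq0 hqb hφ x).integrable ν)
    (fun y => ?_)
  exact mul_le_mul (hqlb x y) (hφlb y) hc.le (le_trans hεm_pos.le (hqlb x y))

lemma key_aux [IsProbabilityMeasure ν]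
    (hq : Measurable fun p : X × X => q p.1 p.2)
    (hεm_pos : 0 < εm) (hεle : εm ≤ εp)
    (hq_lb : ∀ x y, εm ≤ q x y) (hq_ub : ∀ x y, q x y ≤ εp)
    {hs : X → ℝ} (hhs : Reg hs) {c0 : ℝ} (hc0 : 0 < c0) (hhs_lb : ∀ y, c0 ≤ hs y)
    {f : X → ℝ} (hf : Reg f) (L U : ℝ)
    (hfl : ∀ y, L * hs y ≤ f y) (hfu : ∀ y, f y ≤ U * hs y)
    (x x' : X) (hZ : TK ν q hs x' ≤ TK ν q hs x) :
    TK ν q f x * TK ν q hs x' - TK ν q f x' * TK ν q hs x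
        ≤ (1 - εm / εp) * (U - L) * (TK ν q hs x * TK ν q hs x')
    ∧ TK ν q f x' * TK ν q hs x - TK ν q f x * TK ν q hs x'
        ≤ (1 - εm / εp) * (U - L) * (TK ν q hs x * TK ν q hs x') := by
  have hεp_pos : 0 < εp := lt_of_lt_of_le hεm_pos hεle
  have hq0 : ∀ x y, 0 ≤ q x y := fun x y => le_trans hεm_pos.le (hq_lb x y)
  set e := εm / εp with he
  have he_pos : 0 < e := div_pos hεm_pos hεp_pos
  have he1 : e ≤ 1 := (div_le_one hεp_pos).mpr hεle
  set Z := TK ν q hs x with hZdef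
  set Z' := TK ν q hs x' with hZ'def
  have hZ'pos : 0 < Z' := lt_of_lt_of_le (mul_pos hεm_pos hc0)
    (TK_lb_pos hq hεm_pos hq_lb hq_ub hhs hc0 hhs_lb x')
  have hZpos : 0 < Z := lt_of_lt_of_le hZ'pos hZ
  -- pointwise inequalities used in both parts
  have heq : ∀ y, e * q x y ≤ q x' y := by
    intro y
    calc e * q x y ≤ e * εp := mul_le_mul_of_nonneg_left (hq_ub x y) he_pos.le
    _ = εm := by rw [he]; field_simp
    _ ≤ q x' y := hq_lb x' y
  have hc2 : ∀ y, e * Z' * q x y - Z * q x' y ≤ 0 := by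
    intro y
    have h2a : Z' * (e * q x y) ≤ Z' * q x' y :=
      mul_le_mul_of_nonneg_left (heq y) hZ'pos.le
    have h2b : Z' * q x' y ≤ Z * q x' y :=
      mul_le_mul_of_nonneg_right hZ (hq0 x' y)
    nlinarith [h2a, h2b]
  have hc1 : ∀ y, 0 ≤ (1 - e) * Z' * q x y := by
    intro y
    have h1e : 0 ≤ 1 - e := by linarith
    exact mul_nonneg (mul_nonneg h1e hZ'pos.le) (hq0 x y)
  -- integrability facts
  have intqf : ∀ z : X, Integrable (fun y => q z y * f y) ν :=
    fun z => (reg_qmul hq hq0 hq_ub hf z).integrable ν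
  have intqh : ∀ z : X, Integrable (fun y => q z y * hs y) ν :=
    fun z => (reg_qmul hq hq0 hq_ub hhs z).integrable ν
  constructor
  · -- part (i)
    set A := (1 - e) * U * Z' + e * L * Z' with hA
    set B := -(L * Z) with hB
    have hpt : ∀ y, q x y * f y * Z' - q x' y * f y * Z
        ≤ A * (q x y * hs y) + B * (q x' y * hs y) := by
      intro y
      have e1 : f y * ((1 - e) * Z' * q x y) ≤ (U * hs y) * ((1 - e) * Z' * q x y) :=
        mul_le_mul_of_nonneg_right (hfu y) (hc1 y)
      have e2 : f y * (e * Z' * q x y - Z * q x' y)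
          ≤ (L * hs y) * (e * Z' * q x y - Z * q x' y) :=
        mul_le_mul_of_nonpos_right (hfl y) (hc2 y)
      calc q x y * f y * Z' - q x' y * f y * Z
          = f y * ((1 - e) * Z' * q x y) + f y * (e * Z' * q x y - Z * q x' y) := by ring
        _ ≤ U * hs y * ((1 - e) * Z' * q x y) + L * hs y * (e * Z' * q x y - Z * q x' y) :=
            add_le_add e1 e2
        _ = A * (q x y * hs y) + B * (q x' y * hs y) := by rw [hA, hB]; ring
    have hint : TK ν q f x * Z' - TK ν q f x' * Z
        = ∫ y, (q x y * f y * Z' - q x' y * f y * Z) ∂ν := by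
      rw [integral_sub ((intqf x).mul_const _) ((intqf x').mul_const _),
        integral_mul_const, integral_mul_const]
      rfl
    have hint2 : ∫ y, (A * (q x y * hs y) + B * (q x' y * hs y)) ∂ν
        = A * Z + B * Z' := by
      rw [integral_add ((intqh x).const_mul _) ((intqh x').const_mul _),
        integral_const_mul, integral_const_mul]
      rfl
    have hmono : TK ν q f x * Z' - TK ν q f x' * Z ≤ A * Z + B * Z' := by
      rw [hint, ← hint2]
      exact integral_mono (((intqf x).mul_const _).sub ((intqf x').mul_const _))
        (((intqh x).const_mul _).add ((intqh x').const_mul _)) hpt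
    calc TK ν q f x * Z' - TK ν q f x' * Z ≤ A * Z + B * Z' := hmono
    _ = (1 - e) * (U - L) * (Z * Z') := by rw [hA, hB]; ring
  · -- part (ii)
    set A := U * Z with hA
    set B := -(e * U * Z' + (1 - e) * L * Z') with hB
    have hpt : ∀ y, q x' y * f y * Z - q x y * f y * Z'
        ≤ A * (q x' y * hs y) + B * (q x y * hs y) := by
      intro y
      have e1 : f y * (Z * q x' y - e * Z' * q x y)
          ≤ (U * hs y) * (Z * q x' y - e * Z' * q x y) :=
        mul_le_mul_of_nonneg_right (hfu y) (by linarith [hc2 y])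
      have e2 : f y * (-((1 - e) * Z' * q x y)) ≤ (L * hs y) * (-((1 - e) * Z' * q x y)) :=
        mul_le_mul_of_nonpos_right (hfl y) (neg_nonpos.mpr (hc1 y))
      calc q x' y * f y * Z - q x y * f y * Z'
          = f y * (Z * q x' y - e * Z' * q x y) + f y * (-((1 - e) * Z' * q x y)) := by ring
        _ ≤ U * hs y * (Z * q x' y - e * Z' * q x y) + L * hs y * (-((1 - e) * Z' * q x y)) :=
            add_le_add e1 e2
        _ = A * (q x' y * hs y) + B * (q x y * hs y) := by rw [hA, hB]; ring
    have hint : TK ν q f x' * Z - TK ν q f x * Z'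
        = ∫ y, (q x' y * f y * Z - q x y * f y * Z') ∂ν := by
      rw [integral_sub ((intqf x').mul_const _) ((intqf x).mul_const _),
        integral_mul_const, integral_mul_const]
      rfl
    have hint2 : ∫ y, (A * (q x' y * hs y) + B * (q x y * hs y)) ∂ν
        = A * Z' + B * Z := by
      rw [integral_add ((intqh x').const_mul _) ((intqh x).const_mul _),
        integral_const_mul, integral_const_mul]
      rfl
    have hmono : TK ν q f x' * Z - TK ν q f x * Z' ≤ A * Z' + B * Z := by
      rw [hint, ← hint2]
      exact integral_mono (((intqf x').mul_const _).sub ((intqf x).mul_const _))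
        (((intqh x').const_mul _).add ((intqh x).const_mul _)) hpt
    calc TK ν q f x' * Z - TK ν q f x * Z' ≤ A * Z' + B * Z := hmono
    _ = (1 - e) * (U - L) * (Z * Z') := by rw [hA, hB]; ring

end Key
section Main

variable {X : Type*} [MeasurableSpace X] {ν : Measure X} {q : X → X → ℝ} {εm εp lam : ℝ}
  {hs : X → ℝ}

lemma Reg.const_mul {φ : X → ℝ} (h : Reg φ) (c : ℝ) : Reg (fun y => c * φ y) := by
  obtain ⟨hm, C, hC⟩ := h
  exact ⟨hm.const_mul c, ⟨|c| * C, fun y => by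
    rw [abs_mul]; exact mul_le_mul_of_nonneg_left (hC y) (abs_nonneg c)⟩⟩

lemma regTit [IsProbabilityMeasure ν]
    (hq : Measurable fun p : X × X => q p.1 p.2)
    (hq0 : ∀ x y, 0 ≤ q x y) (hqb : ∀ x y, q x y ≤ εp) :
    ∀ n, Reg (TKit ν q n (fun _ : X => (1 : ℝ))) := by
  intro n
  induction n with
  | zero => exact ⟨measurable_const, 1, fun x => by norm_num [TKit]⟩
  | succ n ih => exact Treg hq hq0 hqb ih

lemma sandwich_lb [IsProbabilityMeasure ν]
    (hq : Measurable fun p : X × X => q p.1 p.2)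
    (hq0 : ∀ x y, 0 ≤ q x y) (hqb : ∀ x y, q x y ≤ εp)
    (hhs : Reg hs) (heig : ∀ x, TK ν q hs x = lam * hs x)
    (c : ℝ) (m : ℕ) (h : ∀ x, c * (lam ^ m * hs x) ≤ TKit ν q m (fun _ => (1 : ℝ)) x) :
    ∀ x, c * (lam ^ (m + 1) * hs x) ≤ TKit ν q (m + 1) (fun _ => (1 : ℝ)) x := by
  intro x
  have h1 : TK ν q (fun y => (c * lam ^ m) * hs y) x
      ≤ TK ν q (TKit ν q m (fun _ => (1 : ℝ))) x :=
    Tmono hq hq0 hqb (hhs.const_mul _) (regTit hq hq0 hqb m)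
      (fun y => by rw [mul_assoc]; exact h y) x
  have h2 : TK ν q (fun y => (c * lam ^ m) * hs y) x = (c * lam ^ m) * (lam * hs x) := by
    rw [Tconst_mul, heig x]
  calc c * (lam ^ (m + 1) * hs x) = (c * lam ^ m) * (lam * hs x) := by ring
  _ = TK ν q (fun y => (c * lam ^ m) * hs y) x := h2.symm
  _ ≤ TK ν q (TKit ν q m (fun _ => (1 : ℝ))) x := h1

lemma sandwich_ub [IsProbabilityMeasure ν]
    (hq : Measurable fun p : X × X => q p.1 p.2)
    (hq0 : ∀ x y, 0 ≤ q x y) (hqb : ∀ x y, q x y ≤ εp)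
    (hhs : Reg hs) (heig : ∀ x, TK ν q hs x = lam * hs x)
    (c : ℝ) (m : ℕ) (h : ∀ x, TKit ν q m (fun _ => (1 : ℝ)) x ≤ c * (lam ^ m * hs x)) :
    ∀ x, TKit ν q (m + 1) (fun _ => (1 : ℝ)) x ≤ c * (lam ^ (m + 1) * hs x) := by
  intro x
  have h1 : TK ν q (TKit ν q m (fun _ => (1 : ℝ))) x
      ≤ TK ν q (fun y => (c * lam ^ m) * hs y) x :=
    Tmono hq hq0 hqb (regTit hq hq0 hqb m) (hhs.const_mul _)
      (fun y => by rw [mul_assoc]; exact h y) x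
  have h2 : TK ν q (fun y => (c * lam ^ m) * hs y) x = (c * lam ^ m) * (lam * hs x) := by
    rw [Tconst_mul, heig x]
  calc TK ν q (TKit ν q m (fun _ => (1 : ℝ))) x
      ≤ TK ν q (fun y => (c * lam ^ m) * hs y) x := h1
  _ = (c * lam ^ m) * (lam * hs x) := h2
  _ = c * (lam ^ (m + 1) * hs x) := by ring

lemma main_ind [IsProbabilityMeasure ν] (hX : Nonempty X)
    (hq : Measurable fun p : X × X => q p.1 p.2)
    (hεm_pos : 0 < εm) (hεle : εm ≤ εp)
    (hq_lb : ∀ x y, εm ≤ q x y) (hq_ub : ∀ x y, q x y ≤ εp)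
    (hhs : Reg hs)
    (hhs_lb : ∀ x, εm / εp ≤ hs x) (hhs_ub : ∀ x, hs x ≤ εp / εm)
    (hlam_pos : 0 < lam) (heig : ∀ x, TK ν q hs x = lam * hs x) :
    ∀ p : ℕ, ∃ l u : ℝ, εm / εp ≤ l ∧ l ≤ u ∧ u ≤ εp / εm ∧
      u - l ≤ (1 - εm / εp) ^ p * (εp / εm - εm / εp) ∧
      ∀ n, p ≤ n → ∀ x, l * (lam ^ n * hs x) ≤ TKit ν q n (fun _ => (1 : ℝ)) x ∧
        TKit ν q n (fun _ => (1 : ℝ)) x ≤ u * (lam ^ n * hs x) := by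
  have hεp_pos : 0 < εp := lt_of_lt_of_le hεm_pos hεle
  have hq0 : ∀ x y, 0 ≤ q x y := fun x y => le_trans hεm_pos.le (hq_lb x y)
  have he_pos : 0 < εm / εp := div_pos hεm_pos hεp_pos
  have he1 : εm / εp ≤ 1 := (div_le_one hεp_pos).mpr hεle
  have hr1 : 1 ≤ εp / εm := (le_div_iff₀ hεm_pos).mpr (by linarith)
  have hρ0 : 0 ≤ 1 - εm / εp := by linarith
  have her : (εm / εp) * (εp / εm) = 1 := by field_simp
  have hDpos : ∀ (n : ℕ) (x : X), 0 < lam ^ n * hs x := fun n x =>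
    mul_pos (pow_pos hlam_pos n) (lt_of_lt_of_le he_pos (hhs_lb x))
  intro p
  induction p with
  | zero =>
    refine ⟨εm / εp, εp / εm, le_refl _, le_trans he1 hr1, le_refl _, by rw [pow_zero, one_mul], ?_⟩
    intro n _
    induction n with
    | zero =>
      intro x
      constructor
      · simp only [pow_zero, one_mul]
        calc (εm / εp) * hs x ≤ (εm / εp) * (εp / εm) :=
          mul_le_mul_of_nonneg_left (hhs_ub x) he_pos.le
        _ = 1 := her
        _ = TKit ν q 0 (fun _ => (1 : ℝ)) x := rfl
      · simp only [pow_zero, one_mul]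
        calc TKit ν q 0 (fun _ => (1 : ℝ)) x = 1 := rfl
        _ = (εp / εm) * (εm / εp) := by rw [mul_comm]; exact her.symm
        _ ≤ (εp / εm) * hs x :=
          mul_le_mul_of_nonneg_left (hhs_lb x) (by positivity)
    | succ n ih =>
      intro x
      exact ⟨sandwich_lb hq hq0 hq_ub hhs heig _ n (fun z => (ih (Nat.zero_le n) z).1) x,
        sandwich_ub hq hq0 hq_ub hhs heig _ n (fun z => (ih (Nat.zero_le n) z).2) x⟩
  | succ p IH =>
    obtain ⟨l, u, hl, hlu, hu, hw, hbnd⟩ := IH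
    have hul0 : 0 ≤ u - l := by linarith
    set v := fun n => TKit ν q n (fun _ : X => (1 : ℝ)) with hv
    set S := Set.range (fun x => v (p + 1) x / (lam ^ (p + 1) * hs x)) with hS
    have hSne : S.Nonempty := Set.range_nonempty _
    have hlbS : ∀ b ∈ S, l ≤ b := by
      rintro b ⟨x, rfl⟩
      exact (le_div_iff₀ (hDpos (p + 1) x)).mpr (hbnd (p + 1) (Nat.le_succ p) x).1
    have hbdd : BddBelow S := ⟨l, hlbS⟩
    set l' := sInf S with hl'
    have hll' : l ≤ l' := le_csInf hSne hlbS
    have hratio_lb : ∀ x, l' ≤ v (p + 1) x / (lam ^ (p + 1) * hs x) :=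
      fun x => csInf_le hbdd ⟨x, rfl⟩
    have hratio_le_u : ∀ x, v (p + 1) x / (lam ^ (p + 1) * hs x) ≤ u :=
      fun x => (div_le_iff₀ (hDpos (p + 1) x)).mpr (hbnd (p + 1) (Nat.le_succ p) x).2
    -- the contraction step via key_aux
    have hfl : ∀ y, (l * lam ^ p) * hs y ≤ v p y := fun y => by
      rw [mul_assoc]; exact (hbnd p le_rfl y).1
    have hfu : ∀ y, v p y ≤ (u * lam ^ p) * hs y := fun y => by
      rw [mul_assoc]; exact (hbnd p le_rfl y).2
    have hregv : Reg (v p) := regTit hq hq0 hq_ub p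
    have hkey : ∀ x x', v (p + 1) x * TK ν q hs x' - v (p + 1) x' * TK ν q hs x
        ≤ (1 - εm / εp) * ((u * lam ^ p) - (l * lam ^ p)) * (TK ν q hs x * TK ν q hs x') := by
      intro x x'
      rcases le_total (TK ν q hs x') (TK ν q hs x) with h | h
      · exact (key_aux hq hεm_pos hεle hq_lb hq_ub hhs he_pos hhs_lb hregv
          (l * lam ^ p) (u * lam ^ p) hfl hfu x x' h).1
      · have h2 := (key_aux hq hεm_pos hεle hq_lb hq_ub hhs he_pos hhs_lb hregv
          (l * lam ^ p) (u * lam ^ p) hfl hfu x' x h).2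
        calc v (p + 1) x * TK ν q hs x' - v (p + 1) x' * TK ν q hs x
            ≤ (1 - εm / εp) * ((u * lam ^ p) - (l * lam ^ p))
              * (TK ν q hs x' * TK ν q hs x) := h2
        _ = (1 - εm / εp) * ((u * lam ^ p) - (l * lam ^ p))
              * (TK ν q hs x * TK ν q hs x') := by ring
    have hpair : ∀ x x', v (p + 1) x / (lam ^ (p + 1) * hs x)
        ≤ v (p + 1) x' / (lam ^ (p + 1) * hs x') + (1 - εm / εp) * (u - l) := by
      intro x x'
      have hk := hkey x x'
      rw [heig x, heig x'] at hk
      have hmul := mul_le_mul_of_nonneg_left hk (pow_nonneg hlam_pos.le p)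
      have habs : v (p + 1) x / (lam ^ (p + 1) * hs x)
          - v (p + 1) x' / (lam ^ (p + 1) * hs x') ≤ (1 - εm / εp) * (u - l) := by
        rw [div_sub_div _ _ (ne_of_gt (hDpos (p + 1) x)) (ne_of_gt (hDpos (p + 1) x')),
          div_le_iff₀ (mul_pos (hDpos (p + 1) x) (hDpos (p + 1) x'))]
        calc v (p + 1) x * (lam ^ (p + 1) * hs x') - lam ^ (p + 1) * hs x * v (p + 1) x'
            = lam ^ p * (v (p + 1) x * (lam * hs x') - v (p + 1) x' * (lam * hs x)) := by ring
        _ ≤ lam ^ p * ((1 - εm / εp) * (u * lam ^ p - l * lam ^ p)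
              * (lam * hs x * (lam * hs x'))) := hmul
        _ = (1 - εm / εp) * (u - l) * (lam ^ (p + 1) * hs x * (lam ^ (p + 1) * hs x')) := by
              ring
      linarith [habs]
    have hratio_ub : ∀ x, v (p + 1) x / (lam ^ (p + 1) * hs x)
        ≤ l' + (1 - εm / εp) * (u - l) := by
      intro x
      have hlb2 : ∀ b ∈ S, v (p + 1) x / (lam ^ (p + 1) * hs x)
          - (1 - εm / εp) * (u - l) ≤ b := by
        rintro b ⟨x', rfl⟩
        linarith [hpair x x']
      have := le_csInf hSne hlb2
      linarith [this]
    set u' := min u (l' + (1 - εm / εp) * (u - l)) with hu'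
    have hl'u : l' ≤ u := le_trans (hratio_lb hX.some) (hratio_le_u hX.some)
    refine ⟨l', u', le_trans hl hll', le_min hl'u (by nlinarith), le_trans (min_le_left _ _) hu, ?_, ?_⟩
    · have h1 : u' - l' ≤ (1 - εm / εp) * (u - l) := by
        have := min_le_right u (l' + (1 - εm / εp) * (u - l))
        linarith [this]
      calc u' - l' ≤ (1 - εm / εp) * (u - l) := h1
      _ ≤ (1 - εm / εp) * ((1 - εm / εp) ^ p * (εp / εm - εm / εp)) :=
          mul_le_mul_of_nonneg_left hw hρ0
      _ = (1 - εm / εp) ^ (p + 1) * (εp / εm - εm / εp) := by ring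
    · intro n hn
      induction n, hn using Nat.le_induction with
      | base =>
        intro x
        constructor
        · exact (le_div_iff₀ (hDpos (p + 1) x)).mp (hratio_lb x)
        · have hh : v (p + 1) x / (lam ^ (p + 1) * hs x) ≤ u' :=
            le_min (hratio_le_u x) (hratio_ub x)
          exact (div_le_iff₀ (hDpos (p + 1) x)).mp hh
      | succ n hn ih =>
        intro x
        exact ⟨sandwich_lb hq hq0 hq_ub hhs heig _ n (fun z => (ih z).1) x,
          sandwich_ub hq hq0 hq_ub hhs heig _ n (fun z => (ih z).2) x⟩

end Main
open scoped NNReal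
section Bridge

variable {X : Type*} [MeasurableSpace X]

lemma Qop_eq_TK (G : X → ℝ) (M : Kernel X X) (ν : Measure X) [IsProbabilityMeasure ν]
    (q : X → X → ℝ) (hq : Measurable fun p : X × X => q p.1 p.2)
    (hq0 : ∀ x y, 0 ≤ q x y) (hG_pos : ∀ x, 0 < G x)
    (hH : ∀ x (A : Set X), MeasurableSet A →
      ENNReal.ofReal (G x) * M x A = ∫⁻ y in A, ENNReal.ofReal (q x y) ∂ν)
    (φ : X → ℝ) (x : X) : Qop G M φ x = TK ν q φ x := by
  have hmeq : (ENNReal.ofReal (G x)) • M x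
      = ν.withDensity (fun y => (((q x y).toNNReal : ℝ≥0) : ℝ≥0∞)) := by
    ext A hA
    rw [Measure.smul_apply, smul_eq_mul, hH x A hA, withDensity_apply _ hA]
    rfl
  have h1 : ∫ y, φ y ∂((ENNReal.ofReal (G x)) • M x) = G x * ∫ y, φ y ∂(M x) := by
    rw [integral_smul_measure, ENNReal.toReal_ofReal (hG_pos x).le, smul_eq_mul]
  have h2 : ∫ y, φ y ∂(ν.withDensity (fun y => (((q x y).toNNReal : ℝ≥0) : ℝ≥0∞)))
      = ∫ y, (((q x y).toNNReal : ℝ≥0) : ℝ) • φ y ∂ν :=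
    integral_withDensity_eq_integral_smul ((meas_q_left hq x).real_toNNReal) φ
  have h3 : (fun y => (((q x y).toNNReal : ℝ≥0) : ℝ) • φ y) = fun y => q x y * φ y := by
    funext y
    rw [smul_eq_mul, Real.coe_toNNReal _ (hq0 x y)]
  show G x * ∫ y, φ y ∂(M x) = TK ν q φ x
  rw [← h1, hmeq, h2, h3]
  rfl

lemma Qiter_eq_TKit (G : X → ℝ) (M : Kernel X X) (ν : Measure X) [IsProbabilityMeasure ν]
    (q : X → X → ℝ) (hq : Measurable fun p : X × X => q p.1 p.2)
    (hq0 : ∀ x y, 0 ≤ q x y) (hG_pos : ∀ x, 0 < G x)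
    (hH : ∀ x (A : Set X), MeasurableSet A →
      ENNReal.ofReal (G x) * M x A = ∫⁻ y in A, ENNReal.ofReal (q x y) ∂ν) :
    ∀ n, Qiter G M n (fun _ => (1 : ℝ)) = TKit ν q n (fun _ => (1 : ℝ)) := by
  intro n
  induction n with
  | zero => rfl
  | succ n ih =>
    funext x
    show Qop G M (Qiter G M n (fun _ => (1 : ℝ))) x
        = TK ν q (TKit ν q n (fun _ => (1 : ℝ))) x
    rw [ih]
    exact Qop_eq_TK G M ν q hq hq0 hG_pos hH _ x

lemma Qiter_succ_right (G : X → ℝ) (M : Kernel X X) :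
    ∀ (n : ℕ) (φ : X → ℝ), Qiter G M (n + 1) φ = Qiter G M n (Qop G M φ) := by
  intro n
  induction n with
  | zero => intro φ; rfl
  | succ n ih =>
    intro φ
    show Qop G M (Qiter G M (n + 1) φ) = Qop G M (Qiter G M n (Qop G M φ))
    rw [ih φ]

lemma Qop_one (G : X → ℝ) (M : Kernel X X) [IsMarkovKernel M] :
    Qop G M (fun _ => (1 : ℝ)) = G := by
  funext x
  simp [Qop, integral_const, measure_univ]

end Bridge

lemma pow_bound_aux (ρ r : ℝ) (hρ0 : 0 ≤ ρ) (hρ1 : ρ ≤ 1) (j m : ℕ) (hjm : m ≤ j) :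
    ρ ^ j * r ^ 2 ≤ 2 * ρ ^ m * r ^ 2 * (1 + 2 * r ^ 2) := by
  have h1 : ρ ^ j ≤ ρ ^ m := pow_le_pow_of_le_one hρ0 hρ1 hjm
  have h2 : (0:ℝ) ≤ ρ ^ m := pow_nonneg hρ0 m
  nlinarith [sq_nonneg r, sq_nonneg (r * r), mul_nonneg h2 (sq_nonneg r),
    mul_nonneg (mul_nonneg h2 (sq_nonneg r)) (sq_nonneg r)]

set_option maxHeartbeats 1000000 in
theorem stmt12 {X : Type*} [MeasurableSpace X]
    (G : X → ℝ) (M : Kernel X X) [IsMarkovKernel M]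
    (ν : Measure X) [IsProbabilityMeasure ν]
    (q : X → X → ℝ) (εm εp : ℝ)
    (hq_meas : Measurable fun p : X × X => q p.1 p.2)
    (hεm_pos : 0 < εm) (hεle : εm ≤ εp)
    (hq_lb : ∀ x y, εm ≤ q x y) (hq_ub : ∀ x y, q x y ≤ εp)
    (hG_meas : Measurable G) (hG_pos : ∀ x, 0 < G x) (hG_bdd : ∃ c, ∀ x, G x ≤ c)
    (hH : ∀ x (A : Set X), MeasurableSet A →
      ENNReal.ofReal (G x) * M x A = ∫⁻ y in A, ENNReal.ofReal (q x y) ∂ν)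
    (lam : ℝ) (hlam_pos : 0 < lam)
    (ηs : Measure X) [IsProbabilityMeasure ηs]
    (hs : X → ℝ) (hhs_meas : Measurable hs)
    (hhs_lb : ∀ x, εm / εp ≤ hs x) (hhs_ub : ∀ x, hs x ≤ εp / εm)
    (h_meas_eq : ∀ A : Set X, MeasurableSet A →
      ∫⁻ x, ENNReal.ofReal (G x) * M x A ∂ηs = ENNReal.ofReal lam * ηs A)
    (h_fun_eq : ∀ x, Qop G M hs x = lam * hs x)
    (h_norm : ∫ x, hs x ∂ηs = 1)
    (μ : Measure X) [IsProbabilityMeasure μ] :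
    ∀ p n : ℕ, p ≤ n →
      |(∏ ℓ ∈ Finset.Ico p n, etaInt G M μ ℓ G) / lam ^ (n - p) - 1|
        ≤ 2 * (1 - εm / εp) ^ (min (n - p) p) * (εp / εm) ^ 2
            * (1 + 2 * (εp / εm) ^ 2) := by
  intro p n hpn
  have hεp_pos : 0 < εp := lt_of_lt_of_le hεm_pos hεle
  have hq0 : ∀ x y, 0 ≤ q x y := fun x y => le_trans hεm_pos.le (hq_lb x y)
  have he_pos : 0 < εm / εp := div_pos hεm_pos hεp_pos
  have he1 : εm / εp ≤ 1 := (div_le_one hεp_pos).mpr hεle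
  have hr1 : 1 ≤ εp / εm := (le_div_iff₀ hεm_pos).mpr (by linarith)
  have hρ0 : 0 ≤ 1 - εm / εp := by linarith
  have hρ1 : 1 - εm / εp ≤ 1 := by linarith
  have her : (εm / εp) * (εp / εm) = 1 := by field_simp
  have hX : Nonempty X := by
    by_contra hempty
    rw [not_nonempty_iff] at hempty
    have h1 : (ν Set.univ) = 1 := measure_univ
    rw [Set.univ_eq_empty_iff.mpr hempty, measure_empty] at h1
    exact zero_ne_one h1
  have hhsReg : Reg hs := by
    refine ⟨hhs_meas, εp / εm, fun x => abs_le.mpr ⟨?_, hhs_ub x⟩⟩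
    have := hhs_lb x
    have h0 : (0:ℝ) ≤ εp / εm := (div_pos hεp_pos hεm_pos).le
    linarith
  have heig : ∀ x, TK ν q hs x = lam * hs x := fun x => by
    rw [← Qop_eq_TK G M ν q hq_meas hq0 hG_pos hH hs x]
    exact h_fun_eq x
  have hDpos : ∀ (j : ℕ) (x : X), 0 < lam ^ j * hs x := fun j x =>
    mul_pos (pow_pos hlam_pos j) (lt_of_lt_of_le he_pos (hhs_lb x))
  -- the normalized iterates and their integrals
  set v : ℕ → X → ℝ := fun j => TKit ν q j (fun _ => (1 : ℝ)) with hv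
  have hveq : ∀ j, Qiter G M j (fun _ => (1 : ℝ)) = v j :=
    Qiter_eq_TKit G M ν q hq_meas hq0 hG_pos hH
  have hregv : ∀ j, Reg (v j) := fun j => regTit hq_meas hq0 hq_ub j
  set A : ℕ → ℝ := fun j => ∫ x, v j x ∂μ with hA
  have hH_int : Integrable hs μ := hhsReg.integrable μ
  set Hμ : ℝ := ∫ x, hs x ∂μ with hHμ
  have hHμ_lb : εm / εp ≤ Hμ := by
    have h0 : ∫ (_ : X), (εm / εp) ∂μ = εm / εp := by simp [measure_univ]
    rw [hHμ, ← h0]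
    exact integral_mono (integrable_const _) hH_int hhs_lb
  have hHμ_pos : 0 < Hμ := lt_of_lt_of_le he_pos hHμ_lb
  -- integral bounds from an interval certificate
  have hA_bnd : ∀ (c : ℝ) (j : ℕ),
      ((∀ x, c * (lam ^ j * hs x) ≤ v j x) → c * lam ^ j * Hμ ≤ A j) ∧
      ((∀ x, v j x ≤ c * (lam ^ j * hs x)) → A j ≤ c * lam ^ j * Hμ) := by
    intro c j
    have hint1 : Integrable (fun x => (c * lam ^ j) * hs x) μ :=
      (hhsReg.const_mul (c * lam ^ j)).integrable μ
    have hconst : ∫ x, (c * lam ^ j) * hs x ∂μ = c * lam ^ j * Hμ := by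
      rw [integral_const_mul]
    constructor
    · intro hb
      rw [← hconst]
      exact integral_mono hint1 ((hregv j).integrable μ)
        (fun x => by rw [mul_assoc]; exact hb x)
    · intro hb
      rw [← hconst]
      exact integral_mono ((hregv j).integrable μ) hint1
        (fun x => by rw [mul_assoc]; exact hb x)
  -- positivity of all A j
  obtain ⟨l0, u0, hl0, hl0u0, hu0, _, hbnd0⟩ :=
    main_ind hX hq_meas hεm_pos hεle hq_lb hq_ub hhsReg hhs_lb hhs_ub hlam_pos heig 0
  have hApos : ∀ j, 0 < A j := by
    intro j
    have h1 := (hA_bnd l0 j).1 (fun x => (hbnd0 j (Nat.zero_le j) x).1)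
    have h2 : 0 < l0 * lam ^ j * Hμ :=
      mul_pos (mul_pos (lt_of_lt_of_le he_pos hl0) (pow_pos hlam_pos j)) hHμ_pos
    linarith
  -- telescoping product
  have hprod : ∀ m, p ≤ m →
      (∏ ℓ ∈ Finset.Ico p m, etaInt G M μ ℓ G) = A m / A p := by
    intro m hm
    induction m, hm using Nat.le_induction with
    | base => rw [Finset.Ico_self, Finset.prod_empty, div_self (ne_of_gt (hApos p))]
    | succ m hm ih =>
      rw [Finset.prod_Ico_succ_top hm, ih]
      have hnum : Qiter G M m G = Qiter G M (m + 1) (fun _ => (1 : ℝ)) := by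
        rw [Qiter_succ_right G M m (fun _ => (1 : ℝ)), Qop_one G M]
      have heta : etaInt G M μ m G = A (m + 1) / A m := by
        unfold etaInt
        rw [hnum, hveq (m + 1), hveq m]
      rw [heta, div_mul_div_comm, mul_comm (A m) (A (m + 1))]
      exact mul_div_mul_right _ _ (ne_of_gt (hApos m))
  rw [hprod n hpn]
  -- interval certificate at level p
  obtain ⟨l, u, hl, hlu, hu, hw, hbnd⟩ :=
    main_ind hX hq_meas hεm_pos hεle hq_lb hq_ub hhsReg hhs_lb hhs_ub hlam_pos heig p
  have hlpos : 0 < l := lt_of_lt_of_le he_pos hl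
  have hupos : 0 < u := lt_of_lt_of_le hlpos hlu
  have hnk : lam ^ n = lam ^ p * lam ^ (n - p) := by
    rw [← pow_add]
    congr 1
    omega
  -- bounds on the ratio R = A n / A p / lam ^ (n - p)
  have hAn_ub : A n ≤ u * lam ^ n * Hμ := (hA_bnd u n).2 (fun x => (hbnd n hpn x).2)
  have hAn_lb : l * lam ^ n * Hμ ≤ A n := (hA_bnd l n).1 (fun x => (hbnd n hpn x).1)
  have hAp_ub : A p ≤ u * lam ^ p * Hμ := (hA_bnd u p).2 (fun x => (hbnd p le_rfl x).2)
  have hAp_lb : l * lam ^ p * Hμ ≤ A p := (hA_bnd l p).1 (fun x => (hbnd p le_rfl x).1)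
  have hlamk : 0 < lam ^ (n - p) := pow_pos hlam_pos (n - p)
  have hlamp : 0 < lam ^ p := pow_pos hlam_pos p
  have hR_ub : A n / A p / lam ^ (n - p) ≤ u / l := by
    rw [div_div]
    have hd1 : l * lam ^ n * Hμ ≤ A p * lam ^ (n - p) := by
      calc l * lam ^ n * Hμ = (l * lam ^ p * Hμ) * lam ^ (n - p) := by rw [hnk]; ring
      _ ≤ A p * lam ^ (n - p) := mul_le_mul_of_nonneg_right hAp_lb hlamk.le
    calc A n / (A p * lam ^ (n - p)) ≤ (u * lam ^ n * Hμ) / (l * lam ^ n * Hμ) := by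
          apply div_le_div₀ (mul_nonneg (mul_nonneg hupos.le (pow_pos hlam_pos n).le) hHμ_pos.le)
            hAn_ub (mul_pos (mul_pos hlpos (pow_pos hlam_pos n)) hHμ_pos) hd1
    _ = u / l := by
          rw [mul_assoc, mul_assoc]
          exact mul_div_mul_right u l (mul_pos (pow_pos hlam_pos n) hHμ_pos).ne'
  have hR_lb : l / u ≤ A n / A p / lam ^ (n - p) := by
    rw [div_div]
    have hd2 : A p * lam ^ (n - p) ≤ u * lam ^ n * Hμ := by
      calc A p * lam ^ (n - p) ≤ (u * lam ^ p * Hμ) * lam ^ (n - p) :=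
        mul_le_mul_of_nonneg_right hAp_ub hlamk.le
      _ = u * lam ^ n * Hμ := by rw [hnk]; ring
    calc l / u = (l * lam ^ n * Hμ) / (u * lam ^ n * Hμ) := by
          rw [mul_assoc, mul_assoc]
          exact (mul_div_mul_right l u (mul_pos (pow_pos hlam_pos n) hHμ_pos).ne').symm
    _ ≤ A n / (A p * lam ^ (n - p)) :=
          div_le_div₀ (le_of_lt (hApos n)) hAn_lb (mul_pos (hApos p) hlamk) hd2
  -- |R - 1| ≤ (u - l)/l ≤ ρ^p (r - e)/e ≤ ρ^p r^2
  have hul0 : (0:ℝ) ≤ u - l := by linarith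
  have habs : |A n / A p / lam ^ (n - p) - 1| ≤ (u - l) / l := by
    rw [abs_le]
    constructor
    · have h2 : 1 - l / u ≤ (u - l) / l := by
        have h3 : 1 - l / u = (u - l) / u := by field_simp
        rw [h3, div_le_div_iff₀ hupos hlpos]
        exact mul_le_mul_of_nonneg_left hlu hul0
      linarith [hR_lb]
    · have h2 : u / l - 1 = (u - l) / l := by field_simp
      linarith [hR_ub, h2.le]
  have h_re : (εp / εm - εm / εp) / (εm / εp) ≤ (εp / εm) ^ 2 := by
    rw [div_le_iff₀ he_pos]
    have hre2 : (εp / εm) ^ 2 * (εm / εp) = εp / εm := by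
      field_simp
    rw [hre2]
    linarith [he_pos]
  have hfinal1 : (u - l) / l ≤ (1 - εm / εp) ^ p * (εp / εm) ^ 2 := by
    have hc0 : (0:ℝ) ≤ (1 - εm / εp) ^ p * (εp / εm - εm / εp) :=
      mul_nonneg (pow_nonneg hρ0 p) (by linarith)
    have hδ : (u - l) / l ≤ ((1 - εm / εp) ^ p * (εp / εm - εm / εp)) / (εm / εp) :=
      div_le_div₀ hc0 hw he_pos hl
    calc (u - l) / l ≤ ((1 - εm / εp) ^ p * (εp / εm - εm / εp)) / (εm / εp) := hδ
    _ = (1 - εm / εp) ^ p * ((εp / εm - εm / εp) / (εm / εp)) := by ring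
    _ ≤ (1 - εm / εp) ^ p * (εp / εm) ^ 2 :=
        mul_le_mul_of_nonneg_left h_re (pow_nonneg hρ0 p)
  have hgoal : (1 - εm / εp) ^ p * (εp / εm) ^ 2
      ≤ 2 * (1 - εm / εp) ^ (min (n - p) p) * (εp / εm) ^ 2 * (1 + 2 * (εp / εm) ^ 2) :=
    pow_bound_aux (1 - εm / εp) (εp / εm) hρ0 hρ1 p (min (n - p) p) (min_le_right _ _)
  calc |A n / A p / lam ^ (n - p) - 1|
      ≤ (u - l) / l := habs
  _ ≤ (1 - εm / εp) ^ p * (εp / εm) ^ 2 := hfinal1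
  _ ≤ 2 * (1 - εm / εp) ^ (min (n - p) p) * (εp / εm) ^ 2 * (1 + 2 * (εp / εm) ^ 2) := hgoal
end
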